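/- arXiv:1904.00222 — 11 statements merged into one kernel-verified Lean document; each statement's English description precedes it below -/
import Mathlib

section
/- Let X be a metric space satisfying the tripod condition, and let x₁,x₂,x₃ ∈ X be three points whose Gromov products r₁,r₂,r₃ are all positive. Then (i) every x ∈ X satisfies max{d(x₁,x)/r₁, d(x₂,x)/r₂, d(x₃,x)/r₃} ≥ 1, and (ii) there exists m ∈ X with d(xᵢ,m) = rᵢ for i = 1,2,3. Consequently ρ(x₁,x₂,x₃) = 1 and the infimum defining it is attained. -/
/-- A metric space satisfies the tripod condition if every triple of points has a median. -/
def TripodCond (X : Type*) [MetricSpace X] : Prop :=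
  ∀ x₁ x₂ x₃ : X, ∃ m : X,
    dist x₁ m + dist x₂ m = dist x₁ x₂ ∧
    dist x₁ m + dist x₃ m = dist x₁ x₃ ∧
    dist x₂ m + dist x₃ m = dist x₂ x₃

/-- ρ(x₁,x₂,x₃) for given (Gromov product) radii r₁,r₂,r₃. -/
noncomputable def rho3 {X : Type*} [MetricSpace X] (x₁ x₂ x₃ : X) (r₁ r₂ r₃ : ℝ) : ℝ :=
  ⨅ x : X, max (dist x₁ x / r₁) (max (dist x₂ x / r₂) (dist x₃ x / r₃))

theorem stmt0 {X : Type*} [MetricSpace X] (hX : TripodCond X)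
    (x₁ x₂ x₃ : X) (r₁ r₂ r₃ : ℝ)
    (hr₁ : r₁ = (dist x₁ x₂ + dist x₁ x₃ - dist x₂ x₃) / 2)
    (hr₂ : r₂ = (dist x₁ x₂ + dist x₂ x₃ - dist x₁ x₃) / 2)
    (hr₃ : r₃ = (dist x₁ x₃ + dist x₂ x₃ - dist x₁ x₂) / 2)
    (h₁ : 0 < r₁) (h₂ : 0 < r₂) (h₃ : 0 < r₃) :
    (∀ x : X, 1 ≤ max (dist x₁ x / r₁) (max (dist x₂ x / r₂) (dist x₃ x / r₃))) ∧
    (∃ m : X, dist x₁ m = r₁ ∧ dist x₂ m = r₂ ∧ dist x₃ m = r₃) ∧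
    rho3 x₁ x₂ x₃ r₁ r₂ r₃ = 1 := by
  have hlb : ∀ x : X, 1 ≤ max (dist x₁ x / r₁) (max (dist x₂ x / r₂) (dist x₃ x / r₃)) := by
    intro x
    by_contra h
    push_neg at h
    have h1 : dist x₁ x / r₁ < 1 := lt_of_le_of_lt (le_max_left _ _) h
    have h2 : dist x₂ x / r₂ < 1 :=
      lt_of_le_of_lt (le_trans (le_max_left _ _) (le_max_right _ _)) h
    have h1' : dist x₁ x < r₁ := (div_lt_one h₁).mp h1
    have h2' : dist x₂ x < r₂ := (div_lt_one h₂).mp h2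
    have := dist_triangle x₁ x x₂
    rw [dist_comm x x₂] at this
    linarith
  obtain ⟨m, hm₁₂, hm₁₃, hm₂₃⟩ := hX x₁ x₂ x₃
  have hd₁ : dist x₁ m = r₁ := by linarith
  have hd₂ : dist x₂ m = r₂ := by linarith
  have hd₃ : dist x₃ m = r₃ := by linarith
  refine ⟨hlb, ⟨m, hd₁, hd₂, hd₃⟩, ?_⟩
  apply le_antisymm
  · have : max (dist x₁ m / r₁) (max (dist x₂ m / r₂) (dist x₃ m / r₃)) = 1 := by
      rw [hd₁, hd₂, hd₃, div_self h₁.ne', div_self h₂.ne', div_self h₃.ne']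
      simp
    calc rho3 x₁ x₂ x₃ r₁ r₂ r₃ ≤ _ :=
          ciInf_le ⟨1, fun y ⟨x, hx⟩ => hx ▸ hlb x⟩ m
      _ = 1 := this
  · have : Nonempty X := ⟨m⟩
    exact le_ciInf hlb
end

section
/- Every tripod space has non-positive curvature in the sense of intersection of balls: if X is a metric space satisfying the tripod condition, x₁,x₂,x₃ ∈ X have positive Gromov products r₁,r₂,r₃, and x̄₁,x̄₂,x̄₃ is a comparison triangle in the Euclidean plane ℝ² (i.e. ‖x̄ᵢ−x̄ⱼ‖ = d(xᵢ,xⱼ) for all i < j), then ρ(x₁,x₂,x₃) ≤ ρ(x̄₁,x̄₂,x̄₃), where ρ(x̄₁,x̄₂,x̄₃) := inf over x ∈ ℝ² of max{‖x−x̄₁‖/r₁, ‖x−x̄₂‖/r₂, ‖x−x̄₃‖/r₃}. -/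
/-- Every tripod space has non-positive curvature in the sense of intersection of balls. -/
theorem stmt1 {X : Type*} [MetricSpace X] (hX : TripodCond X)
    (x₁ x₂ x₃ : X) (r₁ r₂ r₃ : ℝ)
    (hr₁ : r₁ = (dist x₁ x₂ + dist x₁ x₃ - dist x₂ x₃) / 2)
    (hr₂ : r₂ = (dist x₁ x₂ + dist x₂ x₃ - dist x₁ x₃) / 2)
    (hr₃ : r₃ = (dist x₁ x₃ + dist x₂ x₃ - dist x₁ x₂) / 2)
    (h₁ : 0 < r₁) (h₂ : 0 < r₂) (h₃ : 0 < r₃)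
    (y₁ y₂ y₃ : EuclideanSpace ℝ (Fin 2))
    (hy₁₂ : dist y₁ y₂ = dist x₁ x₂)
    (hy₁₃ : dist y₁ y₃ = dist x₁ x₃)
    (hy₂₃ : dist y₂ y₃ = dist x₂ x₃) :
    rho3 x₁ x₂ x₃ r₁ r₂ r₃ ≤ rho3 y₁ y₂ y₃ r₁ r₂ r₃ := by
  have key : (1:ℝ) ≤ rho3 y₁ y₂ y₃ r₁ r₂ r₃ := by
    apply le_ciInf
    intro x
    by_contra h
    push_neg at h
    simp only [max_lt_iff] at h
    obtain ⟨a1, a2, _⟩ := h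
    rw [div_lt_one h₁] at a1
    rw [div_lt_one h₂] at a2
    have ht := dist_triangle y₁ x y₂
    rw [dist_comm x y₂] at ht
    linarith
  refine le_trans ?_ key
  obtain ⟨m, e12, e13, e23⟩ := hX x₁ x₂ x₃
  have hm1 : dist x₁ m = r₁ := by rw [hr₁]; linarith
  have hm2 : dist x₂ m = r₂ := by rw [hr₂]; linarith
  have hm3 : dist x₃ m = r₃ := by rw [hr₃]; linarith
  have hbdd : BddBelow (Set.range fun x : X =>
      max (dist x₁ x / r₁) (max (dist x₂ x / r₂) (dist x₃ x / r₃))) := by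
    refine ⟨0, ?_⟩
    rintro _ ⟨x, rfl⟩
    have : (0:ℝ) ≤ dist x₁ x / r₁ := by positivity
    exact le_trans this (le_max_left _ _)
  have hle : rho3 x₁ x₂ x₃ r₁ r₂ r₃ ≤
      max (dist x₁ m / r₁) (max (dist x₂ m / r₂) (dist x₃ m / r₃)) := ciInf_le hbdd m
  rw [hm1, hm2, hm3, div_self h₁.ne', div_self h₂.ne', div_self h₃.ne'] at hle
  simpa using hle
end

section
/- Let X be a complete CAT(0) space, let x₁,…,xₙ be finitely many points of X and r₁,…,rₙ positive numbers. Then μ' := inf{μ > 0 : ⋂ᵢ₌₁ⁿ B̄(xᵢ, μrᵢ) ≠ ∅} is finite, the intersection ⋂ᵢ₌₁ⁿ B̄(xᵢ, μ'rᵢ) consists of exactly one point m, and m lies in the closure of the convex hull of F' := {xᵢ : d(m,xᵢ) = μ'rᵢ}. -/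
/-- `γ` is a geodesic from `x` to `y`: an isometric embedding of `[0, dist x y]`
with `γ 0 = x` and `γ (dist x y) = y`. -/
def IsGeodesicFrom {X : Type*} [MetricSpace X] (x y : X) (γ : ℝ → X) : Prop :=
  γ 0 = x ∧ γ (dist x y) = y ∧
    ∀ s ∈ Set.Icc (0:ℝ) (dist x y), ∀ t ∈ Set.Icc (0:ℝ) (dist x y),
      dist (γ s) (γ t) = |s - t|

/-- A metric space is geodesic if every pair of points is joined by a geodesic. -/
def GeodesicSpace (X : Type*) [MetricSpace X] : Prop :=
  ∀ x y : X, ∃ γ : ℝ → X, IsGeodesicFrom x y γ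

/-- The point at arclength `t` on the Euclidean segment from `a` to `b`. -/
noncomputable def cmpPt (a b : EuclideanSpace ℝ (Fin 2)) (t : ℝ) :
    EuclideanSpace ℝ (Fin 2) :=
  AffineMap.lineMap a b (t / dist a b)

/-- A geodesic metric space is CAT(0) if every geodesic triangle satisfies the
comparison inequality with respect to any comparison triangle in the Euclidean
plane: any two points on the sides of the triangle are at distance at most the
distance of the corresponding points (at the same arclength parameters) on the
comparison triangle. -/
def IsCAT0 (X : Type*) [MetricSpace X] : Prop :=
  GeodesicSpace X ∧
  ∀ (x₁ x₂ x₃ : X) (γ₁₂ γ₁₃ γ₂₃ : ℝ → X),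
    IsGeodesicFrom x₁ x₂ γ₁₂ → IsGeodesicFrom x₁ x₃ γ₁₃ → IsGeodesicFrom x₂ x₃ γ₂₃ →
    ∀ (y₁ y₂ y₃ : EuclideanSpace ℝ (Fin 2)),
      dist y₁ y₂ = dist x₁ x₂ → dist y₁ y₃ = dist x₁ x₃ → dist y₂ y₃ = dist x₂ x₃ →
      (∀ s ∈ Set.Icc (0:ℝ) (dist x₁ x₂), ∀ t ∈ Set.Icc (0:ℝ) (dist x₁ x₂),
        dist (γ₁₂ s) (γ₁₂ t) ≤ dist (cmpPt y₁ y₂ s) (cmpPt y₁ y₂ t)) ∧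
      (∀ s ∈ Set.Icc (0:ℝ) (dist x₁ x₃), ∀ t ∈ Set.Icc (0:ℝ) (dist x₁ x₃),
        dist (γ₁₃ s) (γ₁₃ t) ≤ dist (cmpPt y₁ y₃ s) (cmpPt y₁ y₃ t)) ∧
      (∀ s ∈ Set.Icc (0:ℝ) (dist x₂ x₃), ∀ t ∈ Set.Icc (0:ℝ) (dist x₂ x₃),
        dist (γ₂₃ s) (γ₂₃ t) ≤ dist (cmpPt y₂ y₃ s) (cmpPt y₂ y₃ t)) ∧
      (∀ s ∈ Set.Icc (0:ℝ) (dist x₁ x₂), ∀ t ∈ Set.Icc (0:ℝ) (dist x₁ x₃),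
        dist (γ₁₂ s) (γ₁₃ t) ≤ dist (cmpPt y₁ y₂ s) (cmpPt y₁ y₃ t)) ∧
      (∀ s ∈ Set.Icc (0:ℝ) (dist x₁ x₂), ∀ t ∈ Set.Icc (0:ℝ) (dist x₂ x₃),
        dist (γ₁₂ s) (γ₂₃ t) ≤ dist (cmpPt y₁ y₂ s) (cmpPt y₂ y₃ t)) ∧
      (∀ s ∈ Set.Icc (0:ℝ) (dist x₁ x₃), ∀ t ∈ Set.Icc (0:ℝ) (dist x₂ x₃),
        dist (γ₁₃ s) (γ₂₃ t) ≤ dist (cmpPt y₁ y₃ s) (cmpPt y₂ y₃ t))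

/-- A subset of a metric space is (geodesically) convex if every geodesic
between two of its points lies in it. -/
def GeodesicConvex {X : Type*} [MetricSpace X] (A : Set X) : Prop :=
  ∀ x ∈ A, ∀ y ∈ A, ∀ γ : ℝ → X, IsGeodesicFrom x y γ →
    ∀ t ∈ Set.Icc (0:ℝ) (dist x y), γ t ∈ A

/-- The (geodesic) convex hull: the intersection of all convex sets containing `A`. -/
def geodConvexHull {X : Type*} [MetricSpace X] (A : Set X) : Set X :=
  ⋂₀ {C : Set X | GeodesicConvex C ∧ A ⊆ C}

/-!
The key inequality is the CN inequality of Bruhat–Tits, obtained from a comparison triangle: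
`d(q, γ(s))² ≤ (1-s) d(q,a)² + s d(q,b)² - s(1-s) d(a,b)²`, where `γ(s)` is the point at
fraction `s` of a geodesic from `a` to `b`.
Applied at midpoints it shows that the sets `⋂ᵢ B̄(xᵢ, μ rᵢ)` have diameter `O(√(μ² - μ'²))`, so by
completeness they shrink to a single point `m` as `μ ↓ μ'`. If `m` were not in the closure of the
convex hull `H` of `F'`, take `p ∈ H` nearly nearest to `m`; convexity of `H` and the CN inequality
force `p` to be strictly closer than `m` to every point of `F'`, and moving `m` slightly towards `p`
yields a point strictly inside every ball `B̄(xᵢ, μ' rᵢ)`, contradicting the minimality of `μ'`.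
-/

open Metric Set Filter Topology

theorem dist_sq_lineMap {E : Type*} [NormedAddCommGroup E] [InnerProductSpace ℝ E]
    (a b c : E) (s : ℝ) :
    dist a (AffineMap.lineMap b c s) ^ 2 =
      (1 - s) * dist a b ^ 2 + s * dist a c ^ 2 - s * (1 - s) * dist b c ^ 2 := by
  have hac : a - c = (a - b) - (c - b) := by abel
  have hal : a - AffineMap.lineMap b c s = (a - b) - s • (c - b) := by
    rw [AffineMap.lineMap_apply_module']; abel
  rw [dist_eq_norm, dist_eq_norm, dist_eq_norm, dist_eq_norm, hal, hac,
    norm_sub_sq_real (a - b) (s • (c - b)), norm_sub_sq_real (a - b) (c - b), norm_smul,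
    inner_smul_right, norm_sub_rev c b, Real.norm_eq_abs, mul_pow, sq_abs]
  ring

theorem exists_euclideanPlane_triangle {a b c : ℝ} (hc : c ≤ a + b) (hb : b ≤ a + c)
    (ha : a ≤ b + c) :
    ∃ y₁ y₂ y₃ : EuclideanSpace ℝ (Fin 2), dist y₁ y₂ = a ∧ dist y₁ y₃ = b ∧ dist y₂ y₃ = c := by
  set p := (a ^ 2 + b ^ 2 - c ^ 2) / (2 * a)
  have hp : 2 * a * p = a ^ 2 + b ^ 2 - c ^ 2 := by
    rcases eq_or_ne a 0 with rfl | ha0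
    · obtain rfl : b = c := by linarith
      simp
    · simp only [p]; field_simp
  have hpb : p ^ 2 ≤ b ^ 2 := by
    rcases eq_or_ne a 0 with rfl | ha0
    · simp [p]; positivity
    · have : (2 * a) ^ 2 * p ^ 2 ≤ (2 * a) ^ 2 * b ^ 2 := by
        rw [← mul_pow, ← mul_pow, hp]
        nlinarith [mul_nonneg (by linarith : 0 ≤ a + b - c) (by linarith : 0 ≤ a + b + c),
          mul_nonneg (by linarith : 0 ≤ c - a + b) (by linarith : 0 ≤ c + a - b)]
      exact le_of_mul_le_mul_left this (by positivity)
  refine ⟨!₂[0, 0], !₂[a, 0], !₂[p, √(b ^ 2 - p ^ 2)], ?_, ?_, ?_⟩ <;>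
    simp [EuclideanSpace.dist_eq, Fin.sum_univ_two, Real.dist_eq, sq_abs,
      Real.sq_sqrt (sub_nonneg.2 hpb)]
  · exact Real.sqrt_sq (by linarith)
  · exact Real.sqrt_sq (by linarith)
  · rw [show (a - p) ^ 2 + (b ^ 2 - p ^ 2) = c ^ 2 by linear_combination -hp,
      Real.sqrt_sq (by linarith)]

theorem IsGeodesicFrom.dist_left {X : Type*} [MetricSpace X] {x y : X} {γ : ℝ → X}
    (hγ : IsGeodesicFrom x y γ) {t : ℝ} (ht : t ∈ Icc 0 (dist x y)) : dist (γ t) x = t := by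
  rw [← hγ.1, hγ.2.2 t ht 0 ⟨le_rfl, dist_nonneg⟩, sub_zero, abs_of_nonneg ht.1]

theorem geodesicConvex_geodConvexHull {X : Type*} [MetricSpace X] (A : Set X) :
    GeodesicConvex (geodConvexHull A) :=
  fun _ ha _ hb γ hγ t ht C hC => hC.1 _ (ha C hC) _ (hb C hC) γ hγ t ht

theorem subset_geodConvexHull {X : Type*} [MetricSpace X] (A : Set X) :
    A ⊆ geodConvexHull A :=
  fun _ ha _ hC => hC.2 ha

namespace IsCAT0

variable {X : Type*} [MetricSpace X]

theorem dist_sq_geodesic_le (hX : IsCAT0 X) {a b : X} {γ : ℝ → X} (hγ : IsGeodesicFrom a b γ)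
    (q : X) {s : ℝ} (hs0 : 0 ≤ s) (hs1 : s ≤ 1) :
    dist (γ (s * dist a b)) q ^ 2 ≤
      (1 - s) * dist a q ^ 2 + s * dist b q ^ 2 - s * (1 - s) * dist a b ^ 2 := by
  obtain ⟨γ₁, hγ₁⟩ := hX.1 q a
  obtain ⟨γ₂, hγ₂⟩ := hX.1 q b
  obtain ⟨y₁, y₂, y₃, h₁₂, h₁₃, h₂₃⟩ := exists_euclideanPlane_triangle
    (dist_triangle_left a b q) (dist_triangle q a b) (dist_triangle_right q a b)
  have hcmp := (hX.2 q a b γ₁ γ₂ γ hγ₁ hγ₂ hγ y₁ y₂ y₃ h₁₂ h₁₃ h₂₃).2.2.2.2.1 0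
    ⟨le_rfl, dist_nonneg⟩ (s * dist a b) ⟨by positivity, mul_le_of_le_one_left dist_nonneg hs1⟩
  have hy₁ : cmpPt y₁ y₂ 0 = y₁ := by simp [cmpPt]
  -- when `a = b` the comparison segment is degenerate and `cmpPt` divides by zero
  have hy : cmpPt y₂ y₃ (s * dist a b) = AffineMap.lineMap y₂ y₃ s := by
    rcases eq_or_ne (dist a b) 0 with hab | hab
    · obtain rfl : y₂ = y₃ := dist_eq_zero.1 (h₂₃.trans hab)
      simp [cmpPt]
    · rw [cmpPt, h₂₃, mul_div_cancel_right₀ _ hab]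
  rw [hγ₁.1, hy₁, hy, dist_comm] at hcmp
  calc dist (γ (s * dist a b)) q ^ 2 ≤ dist y₁ (AffineMap.lineMap y₂ y₃ s) ^ 2 := by gcongr
    _ = _ := by rw [dist_sq_lineMap, h₁₂, h₁₃, h₂₃, dist_comm q, dist_comm q]

theorem exists_midpoint_dist_sq_le (hX : IsCAT0 X) (u v : X) :
    ∃ w, ∀ q, dist w q ^ 2 ≤ (dist u q ^ 2 + dist v q ^ 2) / 2 - dist u v ^ 2 / 4 := by
  obtain ⟨γ, hγ⟩ := hX.1 u v
  refine ⟨γ (1 / 2 * dist u v), fun q => ?_⟩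
  have := hX.dist_sq_geodesic_le hγ q (s := 1 / 2) (by norm_num) (by norm_num)
  linarith

theorem dist_geodesic_lt (hX : IsCAT0 X) {a b q : X} {γ : ℝ → X} (hγ : IsGeodesicFrom a b γ)
    {s : ℝ} (hs0 : 0 < s) (hs1 : s ≤ 1) (hbq : dist b q < dist a q) :
    dist (γ (s * dist a b)) q < dist a q := by
  have hCN := hX.dist_sq_geodesic_le hγ q hs0.le hs1
  have hsq : dist b q ^ 2 < dist a q ^ 2 := by gcongr
  have : 0 ≤ s * (1 - s) * dist a b ^ 2 := by
    have : 0 ≤ 1 - s := by linarith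
    positivity
  refine lt_of_pow_lt_pow_left₀ 2 dist_nonneg ?_
  nlinarith

theorem dist_lt_of_nearly_nearest (hX : IsCAT0 X) {H : Set X} (hH : GeodesicConvex H)
    {m p q : X} {d σ : ℝ} (hd0 : 0 ≤ d) (hd : ∀ c ∈ H, d ≤ dist c m) (hp : p ∈ H) (hq : q ∈ H)
    (hσ0 : 0 < σ) (hσ1 : σ < 1) (hσq : σ * dist m q ^ 2 ≤ d ^ 2 / 2)
    (hmp : dist p m ^ 2 < d ^ 2 + σ * d ^ 2 / 2) : dist p q < dist m q := by
  obtain ⟨γ, hγ⟩ := hX.1 p q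
  have hmem : γ (σ * dist p q) ∈ H :=
    hH p hp q hq γ hγ _ ⟨by positivity, mul_le_of_le_one_left dist_nonneg hσ1.le⟩
  have hCN := hX.dist_sq_geodesic_le hγ m hσ0.le hσ1.le
  have hnear : d ^ 2 ≤ dist (γ (σ * dist p q)) m ^ 2 := by gcongr; exact hd _ hmem
  have h1σ : 0 < 1 - σ := by linarith
  have key : σ * (1 - σ) * dist p q ^ 2 < σ * (1 - σ) * dist m q ^ 2 := by
    rw [dist_comm q m] at hCN
    nlinarith [mul_lt_mul_of_pos_left hmp h1σ, mul_le_mul_of_nonneg_left hσq hσ0.le,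
      sq_nonneg (σ * d)]
  exact lt_of_pow_lt_pow_left₀ 2 dist_nonneg (lt_of_mul_lt_mul_left key (by positivity))

theorem exists_dist_lt_of_notMem_closure (hX : IsCAT0 X) {H : Set X} (hH : GeodesicConvex H)
    {m : X} (hm : m ∉ closure H) {Q : Set X} (hQ : Q.Finite) (hQH : Q ⊆ H) :
    ∃ p, ∀ q ∈ Q, dist p q < dist m q := by
  rcases H.eq_empty_or_nonempty with rfl | hne
  · exact ⟨m, fun q hq => (hQH hq).elim⟩
  set d := infDist m H
  have hd : 0 < d := (infDist_pos_iff_notMem_closure hne).1 hm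
  obtain ⟨σ, hσ0, hσ1, hσQ⟩ : ∃ σ > 0, σ < 1 ∧ ∀ q ∈ Q, σ * dist m q ^ 2 < d ^ 2 / 2 := by
    refine ((eventually_lt_nhds one_pos).and ((eventually_all_finite hQ).2 fun q _ => ?_)).exists_gt
    exact (tendsto_id.mul_const _).eventually_lt_const (by rw [zero_mul]; positivity)
  obtain ⟨p, hpH, hp⟩ : ∃ p ∈ H, dist m p < √(d ^ 2 + σ * d ^ 2 / 2) :=
    (infDist_lt_iff hne).1 ((Real.lt_sqrt hd.le).2 (by nlinarith [mul_pos hσ0 (pow_pos hd 2)]))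
  refine ⟨p, fun q hq => hX.dist_lt_of_nearly_nearest hH hd.le
    (fun c hc => dist_comm c m ▸ infDist_le_dist_of_mem hc) hpH (hQH hq) hσ0 hσ1 (hσQ q hq).le ?_⟩
  rw [dist_comm]
  exact (Real.lt_sqrt dist_nonneg).1 hp

end IsCAT0

section ScaledBalls

variable {X ι : Type*} [MetricSpace X]

def scaledBalls (x : ι → X) (r : ι → ℝ) (μ : ℝ) : Set X :=
  ⋂ i, closedBall (x i) (μ * r i)

noncomputable def criticalScale (x : ι → X) (r : ι → ℝ) : ℝ :=
  sInf {μ | 0 < μ ∧ (scaledBalls x r μ).Nonempty}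

variable {x : ι → X} {r : ι → ℝ}

@[simp]
theorem mem_scaledBalls {μ : ℝ} {z : X} :
    z ∈ scaledBalls x r μ ↔ ∀ i, dist z (x i) ≤ μ * r i := by
  simp [scaledBalls]

theorem scaledBalls_mono (hr : ∀ i, 0 ≤ r i) : Monotone (scaledBalls x r) :=
  fun _ _ hμν _ hz => mem_scaledBalls.2 fun i =>
    (mem_scaledBalls.1 hz i).trans (mul_le_mul_of_nonneg_right hμν (hr i))

theorem nonempty_setOf_scaledBalls_nonempty [Finite ι] [Nonempty ι] (hr : ∀ i, 0 < r i) :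
    {μ | 0 < μ ∧ (scaledBalls x r μ).Nonempty}.Nonempty := by
  let z := x (Classical.arbitrary ι)
  obtain ⟨μ, hμ, hz⟩ : ∃ μ, 0 < μ ∧ ∀ i, dist z (x i) ≤ μ * r i :=
    ((eventually_gt_atTop 0).and (eventually_all.2 fun i =>
      (tendsto_id.atTop_mul_const (hr i)).eventually_ge_atTop _)).exists
  exact ⟨μ, hμ, z, mem_scaledBalls.2 hz⟩

theorem criticalScale_nonneg : 0 ≤ criticalScale x r :=
  Real.sInf_nonneg fun _ hμ => hμ.1.le

theorem criticalScale_le (hr : ∀ i, 0 ≤ r i) {ν : ℝ} (hν : 0 ≤ ν) {z : X}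
    (hz : z ∈ scaledBalls x r ν) : criticalScale x r ≤ ν :=
  le_of_forall_pos_le_add fun _ hε => csInf_le ⟨0, fun _ hμ => hμ.1.le⟩
    ⟨by linarith, z, scaledBalls_mono hr (by linarith) hz⟩

theorem scaledBalls_nonempty_of_criticalScale_lt [Finite ι] [Nonempty ι] (hr : ∀ i, 0 < r i)
    {ν : ℝ} (hν : criticalScale x r < ν) : (scaledBalls x r ν).Nonempty := by
  obtain ⟨μ, ⟨-, z, hz⟩, hμν⟩ := exists_lt_of_csInf_lt (nonempty_setOf_scaledBalls_nonempty hr) hν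
  exact ⟨z, scaledBalls_mono (fun i => (hr i).le) hμν.le hz⟩

theorem not_forall_dist_lt_criticalScale_mul [Finite ι] [Nonempty ι] (hr : ∀ i, 0 < r i)
    (z : X) : ¬ ∀ i, dist z (x i) < criticalScale x r * r i := by
  intro hz
  obtain ⟨ν, hν, hzν⟩ : ∃ ν < criticalScale x r, ∀ i, dist z (x i) < ν * r i :=
    (eventually_all.2 fun i => (tendsto_id.mul_const (r i)).eventually_const_lt (hz i)).exists_lt
  have hν0 : 0 ≤ ν := by
    have i := Classical.arbitrary ι
    exact (pos_of_mul_pos_left (dist_nonneg.trans_lt (hzν i)) (hr i).le).le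
  exact hν.not_ge
    (criticalScale_le (fun i => (hr i).le) hν0 (mem_scaledBalls.2 fun i => (hzν i).le))

end ScaledBalls

namespace IsCAT0

variable {X ι : Type*} [MetricSpace X] {x : ι → X} {r : ι → ℝ}

-- The midpoint of `u` and `v` lies in `scaledBalls x r ν` for
-- `ν ^ 2 = μ ^ 2 - (dist u v / 2R) ^ 2`, hence `criticalScale x r ≤ ν`.
theorem dist_le_of_mem_scaledBalls (hX : IsCAT0 X) [Nonempty ι] (hr : ∀ i, 0 < r i) {R : ℝ}
    (hR : ∀ i, r i ≤ R) {μ : ℝ} {u v : X} (hu : u ∈ scaledBalls x r μ)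
    (hv : v ∈ scaledBalls x r μ) :
    dist u v ≤ 2 * R * √(μ ^ 2 - criticalScale x r ^ 2) := by
  have hR0 : 0 < R := (hr (Classical.arbitrary ι)).trans_le (hR _)
  obtain ⟨w, hw⟩ := hX.exists_midpoint_dist_sq_le u v
  set t := dist u v / (2 * R)
  have hwi : ∀ i, dist w (x i) ^ 2 ≤ (μ ^ 2 - t ^ 2) * r i ^ 2 := fun i => by
    have hui : dist u (x i) ^ 2 ≤ (μ * r i) ^ 2 := by gcongr; exact mem_scaledBalls.1 hu i
    have hvi : dist v (x i) ^ 2 ≤ (μ * r i) ^ 2 := by gcongr; exact mem_scaledBalls.1 hv i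
    have hti : (t * r i) ^ 2 ≤ (dist u v / 2) ^ 2 := by
      gcongr
      · exact mul_nonneg (div_nonneg dist_nonneg (by positivity)) (hr i).le
      · rw [div_mul_eq_mul_div, div_le_div_iff₀ (by positivity) two_pos]
        nlinarith [hR i, dist_nonneg (x := u) (y := v)]
    nlinarith [hw (x i)]
  have hc : 0 ≤ μ ^ 2 - t ^ 2 := by
    have i := Classical.arbitrary ι
    exact nonneg_of_mul_nonneg_left ((sq_nonneg _).trans (hwi i)) (pow_pos (hr i) 2)
  have hw : w ∈ scaledBalls x r √(μ ^ 2 - t ^ 2) := mem_scaledBalls.2 fun i => by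
    rw [← pow_le_pow_iff_left₀ dist_nonneg (mul_nonneg (Real.sqrt_nonneg _) (hr i).le) two_ne_zero,
      mul_pow, Real.sq_sqrt hc]
    exact hwi i
  have hcrit := criticalScale_le (fun i => (hr i).le) (Real.sqrt_nonneg _) hw
  have ht : t ≤ √(μ ^ 2 - criticalScale x r ^ 2) := by
    refine Real.le_sqrt_of_sq_le ?_
    have := pow_le_pow_left₀ criticalScale_nonneg hcrit 2
    rw [Real.sq_sqrt hc] at this
    linarith
  rwa [div_le_iff₀ (by positivity), mul_comm] at ht

theorem exists_mem_scaledBalls_criticalScale [CompleteSpace X] (hX : IsCAT0 X) [Finite ι]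
    [Nonempty ι] (hr : ∀ i, 0 < r i) : (scaledBalls x r (criticalScale x r)).Nonempty := by
  set μ' := criticalScale x r
  obtain ⟨R, hR⟩ := (finite_range r).bddAbove
  have hR0 : 0 < R := (hr (Classical.arbitrary ι)).trans_le (hR (mem_range_self _))
  set s : ℕ → Set X := fun k => scaledBalls x r (μ' + 1 / (k + 1))
  have hs : Antitone s := fun k l hkl =>
    scaledBalls_mono (fun i => (hr i).le) (by gcongr)
  have hdiam : Tendsto (fun k => diam (s k)) atTop (𝓝 0) := by
    have hlim : Tendsto (fun k : ℕ => 2 * R * √((μ' + 1 / (k + 1)) ^ 2 - μ' ^ 2)) atTop (𝓝 0) := by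
      have := (((tendsto_one_div_add_atTop_nhds_zero_nat.const_add μ').pow 2).sub_const
        (μ' ^ 2)).sqrt.const_mul (2 * R)
      rwa [add_zero, sub_self, Real.sqrt_zero, mul_zero] at this
    refine squeeze_zero (fun _ => diam_nonneg) (fun k => diam_le_of_forall_dist_le
      (by positivity) fun u hu v hv => hX.dist_le_of_mem_scaledBalls hr
      (fun i => hR (mem_range_self i)) hu hv) hlim
  obtain ⟨m, hm⟩ := nonempty_iInter_of_nonempty_biInter (s := s)
    (fun k => isClosed_iInter fun i => isClosed_closedBall)
    (fun k => isBounded_closedBall.subset (iInter_subset _ (Classical.arbitrary ι)))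
    (fun N => (scaledBalls_nonempty_of_criticalScale_lt hr
      (lt_add_of_pos_right _ Nat.one_div_pos_of_nat)).mono
        fun z hz => mem_iInter₂.2 fun n hn => hs hn hz)
    hdiam
  refine ⟨m, mem_scaledBalls.2 fun i => ge_of_tendsto'
    ((tendsto_one_div_add_atTop_nhds_zero_nat.const_add μ').mul_const (r i) |>.trans_eq ?_)
    fun k => mem_scaledBalls.1 (mem_iInter.1 hm k) i⟩
  simp

theorem exists_scaledBalls_criticalScale_eq_singleton [CompleteSpace X] (hX : IsCAT0 X)
    [Finite ι] [Nonempty ι] (hr : ∀ i, 0 < r i) :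
    ∃ m, scaledBalls x r (criticalScale x r) = {m} := by
  obtain ⟨m, hm⟩ := hX.exists_mem_scaledBalls_criticalScale hr
  obtain ⟨R, hR⟩ := (finite_range r).bddAbove
  refine ⟨m, eq_singleton_iff_unique_mem.2 ⟨hm, fun z hz => dist_le_zero.1 ?_⟩⟩
  simpa using hX.dist_le_of_mem_scaledBalls hr (fun i => hR (mem_range_self i)) hz hm

theorem mem_closure_geodConvexHull_of_mem_scaledBalls (hX : IsCAT0 X) [Finite ι] [Nonempty ι]
    (hr : ∀ i, 0 < r i) {m : X} (hm : m ∈ scaledBalls x r (criticalScale x r)) :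
    m ∈ closure (geodConvexHull {p | ∃ i, p = x i ∧ dist m (x i) = criticalScale x r * r i}) := by
  set μ' := criticalScale x r
  set F := {p | ∃ i, p = x i ∧ dist m (x i) = μ' * r i}
  by_contra hmF
  obtain ⟨p, hp⟩ := hX.exists_dist_lt_of_notMem_closure (geodesicConvex_geodConvexHull F) hmF
    ((finite_range x).subset (by rintro _ ⟨i, rfl, -⟩; exact mem_range_self i))
    (subset_geodConvexHull F)
  obtain ⟨γ, hγ⟩ := hX.1 m p
  have hmove : ∀ i, ∀ᶠ s in 𝓝[>] 0, dist (γ (s * dist m p)) (x i) < μ' * r i := fun i => by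
    rcases (mem_scaledBalls.1 hm i).eq_or_lt with hi | hi
    · filter_upwards [Ioc_mem_nhdsGT one_pos] with s hs
      exact hi ▸ hX.dist_geodesic_lt hγ hs.1 hs.2 (hp (x i) ⟨i, rfl, hi⟩)
    · have hlim : Tendsto (fun s => s * dist m p + dist m (x i)) (𝓝[>] 0) (𝓝 (dist m (x i))) := by
        refine tendsto_nhdsWithin_of_tendsto_nhds ?_
        simpa using ((continuous_id.mul continuous_const).add continuous_const).tendsto
          (0 : ℝ) (f := fun s => s * dist m p + dist m (x i))
      filter_upwards [hlim.eventually_lt_const hi, Ioc_mem_nhdsGT one_pos] with s hs hs1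
      calc dist (γ (s * dist m p)) (x i) ≤ dist (γ (s * dist m p)) m + dist m (x i) :=
            dist_triangle _ _ _
        _ = s * dist m p + dist m (x i) := by
            rw [hγ.dist_left ⟨mul_nonneg hs1.1.le dist_nonneg,
              mul_le_of_le_one_left dist_nonneg hs1.2⟩]
        _ < μ' * r i := hs
  obtain ⟨s, hs⟩ := (eventually_all.2 hmove).exists
  exact not_forall_dist_lt_criticalScale_mul hr _ hs

end IsCAT0

theorem stmt2 {X : Type*} [MetricSpace X] [CompleteSpace X] (hX : IsCAT0 X)
    {n : ℕ} (hn : 0 < n) (x : Fin n → X) (r : Fin n → ℝ) (hr : ∀ i, 0 < r i) :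
    {μ : ℝ | 0 < μ ∧ (⋂ i, Metric.closedBall (x i) (μ * r i)).Nonempty}.Nonempty ∧
    ∃ m : X,
      (⋂ i, Metric.closedBall (x i)
          (sInf {μ : ℝ | 0 < μ ∧ (⋂ j, Metric.closedBall (x j) (μ * r j)).Nonempty} * r i))
        = {m} ∧
      m ∈ closure (geodConvexHull {p : X | ∃ i, p = x i ∧
        dist m (x i) =
          sInf {μ : ℝ | 0 < μ ∧ (⋂ j, Metric.closedBall (x j) (μ * r j)).Nonempty} * r i}) := by
  have : Nonempty (Fin n) := ⟨⟨0, hn⟩⟩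
  obtain ⟨m, hm⟩ := hX.exists_scaledBalls_criticalScale_eq_singleton (x := x) hr
  exact ⟨nonempty_setOf_scaledBalls_nonempty hr, m, hm,
    hX.mem_closure_geodConvexHull_of_mem_scaledBalls hr (hm ▸ mem_singleton m)⟩
end

section
/- Let X be a complete CAT(0) space and x₁,x₂,x₃ ∈ X a triple of points whose Gromov products r₁,r₂,r₃ are all positive. Then the infimum ρ := inf over x ∈ X of max{d(x₁,x)/r₁, d(x₂,x)/r₂, d(x₃,x)/r₃} is attained at a unique point m ∈ X, and moreover d(xᵢ,m) = ρ·rᵢ for i = 1,2,3. -/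
/-!
In a CAT(0) space every pair `x, y` has a midpoint `z` with
`d(q,z)² ≤ (d(q,x)² + d(q,y)²)/2 - d(x,y)²/4` for all `q` (the Bruhat–Tits inequality, read off
the comparison triangle). Hence the square of `f = maxᵢ d(xᵢ,·)/rᵢ` is uniformly midpoint convex,
minimizing sequences of `f` are Cauchy, and in a complete space `f` attains its infimum `ρ` at a
unique point `m`. As `d(xᵢ,xⱼ) = rᵢ + rⱼ`, the triangle inequality gives `ρ ≥ 1`.

Suppose `d(xₐ,m) < ρ rₐ`. If `ρ = 1`, this contradicts `d(xₐ,x_b) = rₐ + r_b`. If `ρ > 1`, let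
`p` be the point of `[x_b,x_c]` with `d(x_b,p) = r_b`, `d(x_c,p) = r_c`. Moving `m` a little
towards `p` keeps `d(xₐ,·) < ρ rₐ` and, by convexity of the distance, pushes `d(x_b,·)` and
`d(x_c,·)` strictly below `ρ r_b` and `ρ r_c`: `f` drops below `ρ`, which is absurd.
-/

open Filter Topology Set

theorem dist_lineMap_sq {V : Type*} [NormedAddCommGroup V] [InnerProductSpace ℝ V]
    (a b c : V) (l : ℝ) :
    dist a (AffineMap.lineMap b c l) ^ 2
      = (1 - l) * dist a b ^ 2 + l * dist a c ^ 2 - l * (1 - l) * dist b c ^ 2 := by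
  have hlin : a - AffineMap.lineMap b c l = (1 - l) • (a - b) + l • (a - c) := by
    rw [AffineMap.lineMap_apply_module]; module
  have hbc : b - c = (a - c) - (a - b) := by abel
  rw [dist_eq_norm, dist_eq_norm, dist_eq_norm, dist_eq_norm, hlin, hbc]
  generalize a - b = u, a - c = w
  rw [norm_add_sq_real, norm_sub_sq_real, norm_smul, norm_smul, real_inner_smul_left,
    real_inner_smul_right, real_inner_comm w]
  simp only [Real.norm_eq_abs, mul_pow, sq_abs]
  ring

theorem exists_euclideanTriangle {a b c : ℝ} (ha : 0 ≤ a) (hb : 0 ≤ b) (hc : 0 ≤ c)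
    (hab : c ≤ a + b) (hac : b ≤ a + c) (hbc : a ≤ b + c) :
    ∃ y₁ y₂ y₃ : EuclideanSpace ℝ (Fin 2), dist y₁ y₂ = a ∧ dist y₁ y₃ = b ∧ dist y₂ y₃ = c := by
  -- `y₃ = (p, q)` with `p` from the law of cosines (for `a = 0`, `p = 0` since `x / 0 = 0`)
  set p := (a ^ 2 + b ^ 2 - c ^ 2) / (2 * a)
  have hp : 2 * a * p = a ^ 2 + b ^ 2 - c ^ 2 := by
    rcases ha.eq_or_lt with rfl | ha
    · simp only [mul_zero, zero_mul]; nlinarith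
    · simp only [p]; field_simp
  have hpb : p ^ 2 ≤ b ^ 2 := by
    rcases ha.eq_or_lt with rfl | ha
    · simpa [p] using sq_nonneg b
    · have hp2 : (2 * a * p) ^ 2 ≤ (2 * a * b) ^ 2 := by
        rw [hp]
        nlinarith [mul_nonneg (by nlinarith : 0 ≤ c ^ 2 - (a - b) ^ 2)
          (by nlinarith : 0 ≤ (a + b) ^ 2 - c ^ 2)]
      nlinarith [mul_pos ha ha]
  set q := √(b ^ 2 - p ^ 2)
  have hq : q ^ 2 = b ^ 2 - p ^ 2 := Real.sq_sqrt (by linarith)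
  refine ⟨!₂[0, 0], !₂[a, 0], !₂[p, q], ?_, ?_, ?_⟩ <;>
    simp only [EuclideanSpace.dist_eq, Fin.sum_univ_two, Real.dist_eq, sq_abs, Fin.isValue,
      Matrix.cons_val_zero, Matrix.cons_val_one, Matrix.cons_val_fin_one, zero_sub, sub_self,
      neg_sq, ne_eq, OfNat.ofNat_ne_zero, not_false_eq_true, zero_pow, add_zero]
  · exact Real.sqrt_sq ha
  · rw [hq, add_sub_cancel, Real.sqrt_sq hb]
  · rw [show (a - p) ^ 2 + q ^ 2 = c ^ 2 by linear_combination hq - hp, Real.sqrt_sq hc]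

theorem cmpPt_mul_dist (a b : EuclideanSpace ℝ (Fin 2)) (l : ℝ) :
    cmpPt a b (l * dist a b) = AffineMap.lineMap a b l := by
  rcases eq_or_ne a b with rfl | hab
  · simp [cmpPt]
  · rw [cmpPt, mul_div_assoc, div_self (dist_ne_zero.2 hab), mul_one]

namespace IsGeodesicFrom

variable {X : Type*} [MetricSpace X] {x y : X} {γ : ℝ → X} {t : ℝ}

theorem dist_left_s3 (hγ : IsGeodesicFrom x y γ) (ht : t ∈ Icc 0 (dist x y)) :
    dist x (γ t) = t := by
  rw [← hγ.1, hγ.2.2 0 ⟨le_rfl, dist_nonneg⟩ t ht, zero_sub, abs_neg, abs_of_nonneg ht.1]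

theorem dist_right (hγ : IsGeodesicFrom x y γ) (ht : t ∈ Icc 0 (dist x y)) :
    dist (γ t) y = dist x y - t := by
  nth_rewrite 1 [← hγ.2.1]
  rw [hγ.2.2 t ht _ ⟨dist_nonneg, le_rfl⟩, abs_of_nonpos (sub_nonpos.2 ht.2), neg_sub]

end IsGeodesicFrom

namespace IsCAT0

variable {X : Type*} [MetricSpace X] {m p : X} {γ : ℝ → X} {l : ℝ}

theorem dist_sq_le (hX : IsCAT0 X) (hγ : IsGeodesicFrom m p γ) (q : X) (hl₀ : 0 ≤ l)
    (hl₁ : l ≤ 1) :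
    dist q (γ (l * dist m p)) ^ 2
      ≤ (1 - l) * dist q m ^ 2 + l * dist q p ^ 2 - l * (1 - l) * dist m p ^ 2 := by
  obtain ⟨γqm, hγqm⟩ := hX.1 q m
  obtain ⟨γqp, hγqp⟩ := hX.1 q p
  obtain ⟨y₁, y₂, y₃, h₁₂, h₁₃, h₂₃⟩ := exists_euclideanTriangle dist_nonneg dist_nonneg
    dist_nonneg (dist_triangle_left m p q) (dist_triangle q m p) (dist_triangle_right q m p)
  -- comparison for the sides `[q, m]` and `[m, p]`, at the points `q` and `γ (l * dist m p)`
  have hcmp := (hX.2 q m p γqm γqp γ hγqm hγqp hγ y₁ y₂ y₃ h₁₂ h₁₃ h₂₃).2.2.2.2.1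
    0 ⟨le_rfl, dist_nonneg⟩ (l * dist m p) ⟨by positivity, mul_le_of_le_one_left dist_nonneg hl₁⟩
  have hy₁ : cmpPt y₁ y₂ 0 = y₁ := by simp [cmpPt]
  have hy₂₃ : cmpPt y₂ y₃ (l * dist m p) = AffineMap.lineMap y₂ y₃ l := by
    rw [← h₂₃, cmpPt_mul_dist]
  rw [hγqm.1, hy₁, hy₂₃] at hcmp
  calc dist q (γ (l * dist m p)) ^ 2 ≤ dist y₁ (AffineMap.lineMap y₂ y₃ l) ^ 2 := by gcongr
    _ = _ := by rw [dist_lineMap_sq, h₁₂, h₁₃, h₂₃]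

theorem dist_le (hX : IsCAT0 X) (hγ : IsGeodesicFrom m p γ) (q : X) (hl₀ : 0 ≤ l)
    (hl₁ : l ≤ 1) :
    dist q (γ (l * dist m p)) ≤ (1 - l) * dist q m + l * dist q p := by
  have hsq := hX.dist_sq_le hγ q hl₀ hl₁
  have hside : (dist q m - dist q p) ^ 2 ≤ dist m p ^ 2 := by
    rw [dist_comm q m, dist_comm q p]
    exact sq_le_sq.2 ((abs_dist_sub_le m p q).trans (le_abs_self _))
  refine le_of_pow_le_pow_left₀ two_ne_zero (by positivity) ?_
  -- the gap to the square of the right side is `l (1 - l) (d(m,p)² - (d(q,m) - d(q,p))²)`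
  nlinarith [mul_nonneg (mul_nonneg hl₀ (sub_nonneg.2 hl₁)) (sub_nonneg.2 hside)]

theorem exists_dist_sq_midpoint_le (hX : IsCAT0 X) (x y : X) :
    ∃ z, ∀ q, dist q z ^ 2 ≤ (dist q x ^ 2 + dist q y ^ 2) / 2 - dist x y ^ 2 / 4 := by
  obtain ⟨γ, hγ⟩ := hX.1 x y
  exact ⟨γ (1 / 2 * dist x y), fun q =>
    (hX.dist_sq_le hγ q (by norm_num) (by norm_num)).trans_eq (by ring)⟩

theorem exists_dist_lt_of_dist_lt (hX : IsCAT0 X) {a b c m : X} {ra rb rc ρ : ℝ}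
    (hrb : 0 < rb) (hrc : 0 < rc) (hab : ra + rb ≤ dist a b) (hbc : dist b c = rb + rc)
    (hρ : 1 ≤ ρ) (ha : dist a m < ρ * ra) (hb : dist b m ≤ ρ * rb) (hc : dist c m ≤ ρ * rc) :
    ∃ z, dist a z < ρ * ra ∧ dist b z < ρ * rb ∧ dist c z < ρ * rc := by
  rcases hρ.eq_or_lt with rfl | hρ
  · linarith [dist_triangle_right a b m]
  obtain ⟨γbc, hγbc⟩ := hX.1 b c
  have ht : rb ∈ Icc 0 (dist b c) := ⟨hrb.le, by linarith⟩
  set p := γbc rb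
  have hbp : dist b p = rb := hγbc.dist_left_s3 ht
  have hcp : dist c p = rc := by rw [dist_comm, hγbc.dist_right ht]; linarith
  obtain ⟨l, hla, hl⟩ : ∃ l, (1 - l) * dist a m + l * dist a p < ρ * ra ∧ l ∈ Ioo 0 1 := by
    have hcont : Continuous fun l : ℝ => (1 - l) * dist a m + l * dist a p := by fun_prop
    have hlim := (hcont.tendsto' 0 (dist a m) (by simp)).mono_left (nhdsWithin_le_nhds (s := Ioi 0))
    exact ((hlim.eventually_lt_const ha).and (Ioo_mem_nhdsGT one_pos)).exists
  obtain ⟨γ, hγ⟩ := hX.1 m p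
  have hconv := fun q => hX.dist_le hγ q hl.1.le hl.2.le
  refine ⟨γ (l * dist m p), (hconv a).trans_lt hla, (hconv b).trans_lt ?_, (hconv c).trans_lt ?_⟩
  · rw [hbp]
    nlinarith [mul_le_mul_of_nonneg_left hb (sub_nonneg.2 hl.2.le),
      mul_pos (mul_pos hl.1 hrb) (sub_pos.2 hρ)]
  · rw [hcp]
    nlinarith [mul_le_mul_of_nonneg_left hc (sub_nonneg.2 hl.2.le),
      mul_pos (mul_pos hl.1 hrc) (sub_pos.2 hρ)]

end IsCAT0

section MidpointConvex

variable {X : Type*} [MetricSpace X] {G : X → ℝ} {c : ℝ}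

theorem dist_sq_le_of_midpoint_convex
    (hmid : ∀ x y, ∃ z, G z ≤ (G x + G y) / 2 - c * dist x y ^ 2) {ρ : ℝ} (hρ : ∀ z, ρ ≤ G z)
    (x y : X) : c * dist x y ^ 2 ≤ (G x - ρ + (G y - ρ)) / 2 := by
  obtain ⟨z, hz⟩ := hmid x y
  linarith [hρ z]

theorem exists_unique_forall_le_of_midpoint_convex [CompleteSpace X] [Nonempty X]
    (hG : Continuous G) (hbdd : BddBelow (range G)) (hc : 0 < c)
    (hmid : ∀ x y, ∃ z, G z ≤ (G x + G y) / 2 - c * dist x y ^ 2) :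
    ∃! m, ∀ x, G m ≤ G x := by
  set ρ := ⨅ x, G x
  have hρ : ∀ x, ρ ≤ G x := ciInf_le hbdd
  have hdist := dist_sq_le_of_midpoint_convex hmid hρ
  obtain ⟨v, -, hv, hvG⟩ := exists_seq_tendsto_sInf (range_nonempty G) hbdd
  choose u hu using hvG
  have hGu : Tendsto (fun n => G (u n)) atTop (𝓝 ρ) := by simp only [hu]; exact hv
  have hu_cauchy : CauchySeq u := by
    refine Metric.cauchySeq_iff'.2 fun ε hε => ?_
    obtain ⟨N, hN⟩ := eventually_atTop.1
      (hGu.eventually_lt_const (lt_add_of_pos_right ρ (by positivity : 0 < c * ε ^ 2)))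
    refine ⟨N, fun n hn => lt_of_pow_lt_pow_left₀ 2 hε.le ((mul_lt_mul_iff_right₀ hc).1 ?_)⟩
    linarith [hdist (u n) (u N), hN n hn, hN N le_rfl]
  obtain ⟨m, hm⟩ := cauchySeq_tendsto_of_complete hu_cauchy
  have hGm : G m = ρ := tendsto_nhds_unique ((hG.tendsto m).comp hm) hGu
  refine ⟨m, fun x => hGm ▸ hρ x, fun m' hm' => ?_⟩
  have hd := hdist m' m
  rw [le_antisymm (hGm ▸ hm' m) (hρ m'), hGm, sub_self, add_zero, zero_div] at hd
  exact eq_of_dist_eq_zero (pow_eq_zero_iff two_ne_zero |>.1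
    (le_antisymm (nonpos_of_mul_nonpos_right hd hc) (sq_nonneg _)))

end MidpointConvex

noncomputable def maxDistRatio {X : Type*} [MetricSpace X] (x₁ x₂ x₃ : X) (r₁ r₂ r₃ : ℝ) (x : X) :
    ℝ :=
  max (dist x₁ x / r₁) (max (dist x₂ x / r₂) (dist x₃ x / r₃))

section maxDistRatio

variable {X : Type*} [MetricSpace X] {x₁ x₂ x₃ : X} {r₁ r₂ r₃ : ℝ}

theorem continuous_maxDistRatio : Continuous (maxDistRatio x₁ x₂ x₃ r₁ r₂ r₃) := by
  unfold maxDistRatio; fun_prop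

theorem maxDistRatio_le_iff (h₁ : 0 < r₁) (h₂ : 0 < r₂) (h₃ : 0 < r₃) {x : X} {ρ : ℝ} :
    maxDistRatio x₁ x₂ x₃ r₁ r₂ r₃ x ≤ ρ ↔
      dist x₁ x ≤ ρ * r₁ ∧ dist x₂ x ≤ ρ * r₂ ∧ dist x₃ x ≤ ρ * r₃ := by
  simp only [maxDistRatio, max_le_iff, div_le_iff₀ h₁, div_le_iff₀ h₂, div_le_iff₀ h₃]

theorem maxDistRatio_lt_iff (h₁ : 0 < r₁) (h₂ : 0 < r₂) (h₃ : 0 < r₃) {x : X} {ρ : ℝ} :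
    maxDistRatio x₁ x₂ x₃ r₁ r₂ r₃ x < ρ ↔
      dist x₁ x < ρ * r₁ ∧ dist x₂ x < ρ * r₂ ∧ dist x₃ x < ρ * r₃ := by
  simp only [maxDistRatio, max_lt_iff, div_lt_iff₀ h₁, div_lt_iff₀ h₂, div_lt_iff₀ h₃]

theorem one_le_maxDistRatio (h₁ : 0 < r₁) (h₂ : 0 < r₂) (h₃ : 0 < r₃)
    (h₁₂ : dist x₁ x₂ = r₁ + r₂) (x : X) : 1 ≤ maxDistRatio x₁ x₂ x₃ r₁ r₂ r₃ x := by
  by_contra! h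
  obtain ⟨hx₁, hx₂, -⟩ := (maxDistRatio_lt_iff h₁ h₂ h₃).1 h
  linarith [dist_triangle_right x₁ x₂ x]

theorem IsCAT0.exists_maxDistRatio_sq_le (hX : IsCAT0 X) (h₁ : 0 < r₁) (h₂ : 0 < r₂)
    (h₃ : 0 < r₃) {R : ℝ} (h₁R : r₁ ≤ R) (h₂R : r₂ ≤ R) (h₃R : r₃ ≤ R) (x y : X) :
    ∃ z, maxDistRatio x₁ x₂ x₃ r₁ r₂ r₃ z ^ 2
      ≤ (maxDistRatio x₁ x₂ x₃ r₁ r₂ r₃ x ^ 2 + maxDistRatio x₁ x₂ x₃ r₁ r₂ r₃ y ^ 2) / 2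
        - (4 * R ^ 2)⁻¹ * dist x y ^ 2 := by
  set F := maxDistRatio x₁ x₂ x₃ r₁ r₂ r₃
  obtain ⟨z, hz⟩ := hX.exists_dist_sq_midpoint_le x y
  set B := (F x ^ 2 + F y ^ 2) / 2 - (4 * R ^ 2)⁻¹ * dist x y ^ 2 with hB
  have hratio : ∀ q r, 0 < r → r ≤ R → (∀ w, dist q w / r ≤ F w) → (dist q z / r) ^ 2 ≤ B := by
    intro q r hr hrR hqF
    have hRr : (4 * R ^ 2)⁻¹ ≤ (4 * r ^ 2)⁻¹ := by gcongr
    calc (dist q z / r) ^ 2 = dist q z ^ 2 / r ^ 2 := div_pow _ _ 2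
      _ ≤ ((dist q x ^ 2 + dist q y ^ 2) / 2 - dist x y ^ 2 / 4) / r ^ 2 :=
        div_le_div_of_nonneg_right (hz q) (sq_nonneg r)
      _ = ((dist q x / r) ^ 2 + (dist q y / r) ^ 2) / 2 - (4 * r ^ 2)⁻¹ * dist x y ^ 2 := by
        field_simp
      _ ≤ B := by
        rw [hB]
        linarith [pow_le_pow_left₀ (by positivity) (hqF x) 2,
          pow_le_pow_left₀ (by positivity) (hqF y) 2,
          mul_le_mul_of_nonneg_right hRr (sq_nonneg (dist x y))]
  have h₁F : ∀ w, dist x₁ w / r₁ ≤ F w := fun w => le_max_left _ _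
  have h₂F : ∀ w, dist x₂ w / r₂ ≤ F w := fun w => (le_max_left _ _).trans (le_max_right _ _)
  have h₃F : ∀ w, dist x₃ w / r₃ ≤ F w := fun w => (le_max_right _ _).trans (le_max_right _ _)
  have hB₀ : 0 ≤ B := (sq_nonneg _).trans (hratio x₁ r₁ h₁ h₁R h₁F)
  refine ⟨z, (Real.le_sqrt ((div_nonneg dist_nonneg h₁.le).trans (h₁F z)) hB₀).1 ?_⟩
  exact max_le (Real.le_sqrt_of_sq_le (hratio x₁ r₁ h₁ h₁R h₁F))
    (max_le (Real.le_sqrt_of_sq_le (hratio x₂ r₂ h₂ h₂R h₂F))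
      (Real.le_sqrt_of_sq_le (hratio x₃ r₃ h₃ h₃R h₃F)))

end maxDistRatio

theorem stmt3 {X : Type*} [MetricSpace X] [CompleteSpace X] (hX : IsCAT0 X)
    (x₁ x₂ x₃ : X) (r₁ r₂ r₃ : ℝ)
    (hr₁ : r₁ = (dist x₁ x₂ + dist x₁ x₃ - dist x₂ x₃) / 2)
    (hr₂ : r₂ = (dist x₁ x₂ + dist x₂ x₃ - dist x₁ x₃) / 2)
    (hr₃ : r₃ = (dist x₁ x₃ + dist x₂ x₃ - dist x₁ x₂) / 2)
    (h₁ : 0 < r₁) (h₂ : 0 < r₂) (h₃ : 0 < r₃) :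
    ∃ m : X,
      max (dist x₁ m / r₁) (max (dist x₂ m / r₂) (dist x₃ m / r₃))
          = rho3 x₁ x₂ x₃ r₁ r₂ r₃ ∧
      (∀ m' : X,
        max (dist x₁ m' / r₁) (max (dist x₂ m' / r₂) (dist x₃ m' / r₃))
            = rho3 x₁ x₂ x₃ r₁ r₂ r₃ → m' = m) ∧
      dist x₁ m = rho3 x₁ x₂ x₃ r₁ r₂ r₃ * r₁ ∧
      dist x₂ m = rho3 x₁ x₂ x₃ r₁ r₂ r₃ * r₂ ∧
      dist x₃ m = rho3 x₁ x₂ x₃ r₁ r₂ r₃ * r₃ := by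
  have h₁₂ : dist x₁ x₂ = r₁ + r₂ := by rw [hr₁, hr₂]; ring
  have h₁₃ : dist x₁ x₃ = r₁ + r₃ := by rw [hr₁, hr₃]; ring
  have h₂₃ : dist x₂ x₃ = r₂ + r₃ := by rw [hr₂, hr₃]; ring
  set F := maxDistRatio x₁ x₂ x₃ r₁ r₂ r₃
  have hF₁ : ∀ x, 1 ≤ F x := one_le_maxDistRatio h₁ h₂ h₃ h₁₂
  have hF_le_iff : ∀ x x', F x ≤ F x' ↔ F x ^ 2 ≤ F x' ^ 2 := fun x x' =>
    (pow_le_pow_iff_left₀ (by linarith [hF₁ x]) (by linarith [hF₁ x']) two_ne_zero).symm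
  have : Nonempty X := ⟨x₁⟩
  set R := max r₁ (max r₂ r₃)
  obtain ⟨m, hm, hm_unique⟩ := exists_unique_forall_le_of_midpoint_convex
    (continuous_maxDistRatio.pow 2) ⟨0, forall_mem_range.2 fun x => sq_nonneg (F x)⟩
    (by positivity) (hX.exists_maxDistRatio_sq_le h₁ h₂ h₃ (le_max_left r₁ _)
      ((le_max_left r₂ r₃).trans (le_max_right _ _))
      ((le_max_right r₂ r₃).trans (le_max_right _ _)))
  have hmin : ∀ x, F m ≤ F x := fun x => (hF_le_iff m x).2 (hm x)
  have hρ : rho3 x₁ x₂ x₃ r₁ r₂ r₃ = F m :=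
    (IsLeast.isGLB ⟨mem_range_self m, forall_mem_range.2 hmin⟩).ciInf_eq
  rw [hρ]
  obtain ⟨hm₁, hm₂, hm₃⟩ := (maxDistRatio_le_iff h₁ h₂ h₃).1 (le_refl (F m))
  have hno : ∀ z, ¬(dist x₁ z < F m * r₁ ∧ dist x₂ z < F m * r₂ ∧ dist x₃ z < F m * r₃) :=
    fun z hz => (hmin z).not_gt ((maxDistRatio_lt_iff h₁ h₂ h₃).2 hz)
  refine ⟨m, rfl, fun m' hm' => hm_unique m' fun x => (hF_le_iff m' x).1 (hm'.trans_le (hmin x)),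
    hm₁.antisymm (not_lt.1 fun h => ?_), hm₂.antisymm (not_lt.1 fun h => ?_),
    hm₃.antisymm (not_lt.1 fun h => ?_)⟩
  · obtain ⟨z, hz⟩ := hX.exists_dist_lt_of_dist_lt h₂ h₃ h₁₂.ge h₂₃ (hF₁ m) h hm₂ hm₃
    exact hno z hz
  · obtain ⟨z, hz₂, hz₁, hz₃⟩ := hX.exists_dist_lt_of_dist_lt h₁ h₃
      (by rw [dist_comm, h₁₂, add_comm]) h₁₃ (hF₁ m) h hm₁ hm₃
    exact hno z ⟨hz₁, hz₂, hz₃⟩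
  · obtain ⟨z, hz₃, hz₁, hz₂⟩ := hX.exists_dist_lt_of_dist_lt h₁ h₂
      (by rw [dist_comm, h₁₃, add_comm]) h₁₂ (hF₁ m) h hm₁ hm₂
    exact hno z ⟨hz₁, hz₂, hz₃⟩
end

section
/- Every complete CAT(0) space is √2-hyperconvex: if X is a complete CAT(0) space and (xᵢ)_{i∈I} is a family of points of X with positive radii (rᵢ)_{i∈I} satisfying rᵢ + rⱼ ≥ d(xᵢ,xⱼ) for all i,j ∈ I, then the intersection ⋂_{i∈I} B̄(xᵢ, √2·rᵢ) is nonempty. -/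
/-!
Put `f y = sup_i (d(y, xᵢ)² - 2 rᵢ²)`; it is finite and lower semicontinuous. The CN inequality
`d(γ(s), z)² ≤ (1 - s) d(p, z)² + s d(q, z)² - s (1 - s) d(p, q)²`, read off a Euclidean
comparison triangle, makes `f` uniformly convex at midpoints, so minimising sequences are Cauchy
and `f` attains its minimum in the complete space. If `f y > 0`, pick `k` with
`d(y, x_k)² > 2 r_k²` and move a little along the geodesic from `y` to `x_k`: by CN and
`d(x_k, xᵢ)² ≤ (r_k + rᵢ)² ≤ 2 r_k² + 2 rᵢ²`, every term of the supremum drops to first order.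
So the minimum is at most `0`, i.e. the minimiser lies in every `B̄(xᵢ, √2 rᵢ)`.
-/

open Set

lemma dist_vec2 (a b c d : ℝ) : dist !₂[a, b] !₂[c, d] = √((a - c) ^ 2 + (b - d) ^ 2) := by
  simp [EuclideanSpace.dist_eq, Fin.sum_univ_two, Real.dist_eq, sq_abs]

lemma lineMap_vec2 (a b c d s : ℝ) :
    AffineMap.lineMap !₂[a, b] !₂[c, d] s = !₂[a + s * (c - a), b + s * (d - b)] := by
  ext j; fin_cases j <;> simp [AffineMap.lineMap_apply] <;> ring

lemma cmpPt_dist (a b : EuclideanSpace ℝ (Fin 2)) : cmpPt a b (dist a b) = b := by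
  rcases eq_or_ne a b with rfl | hab
  · simp [cmpPt]
  · rw [cmpPt, div_self (dist_ne_zero.2 hab), AffineMap.lineMap_apply_one]

lemma exists_apex_of_triangle_inequalities {D A B : ℝ} (hD : 0 < D) (hB : B ≤ D + A)
    (hA : A ≤ D + B) (hAB : D ≤ A + B) :
    ∃ u v : ℝ, u ^ 2 + v ^ 2 = A ^ 2 ∧ (D - u) ^ 2 + v ^ 2 = B ^ 2 := by
  set u := (D ^ 2 + A ^ 2 - B ^ 2) / (2 * D)
  have hu : 2 * D * u = D ^ 2 + A ^ 2 - B ^ 2 := mul_div_cancel₀ _ (by positivity)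
  have hv : 0 ≤ A ^ 2 - u ^ 2 := by
    have : 0 ≤ (4 * D ^ 2) * (A ^ 2 - u ^ 2) := by
      have : (4 * D ^ 2) * (A ^ 2 - u ^ 2) =
          (A + B - D) * (D + A - B) * ((D + B - A) * (D + A + B)) := by
        linear_combination (-(2 * D * u) - (D ^ 2 + A ^ 2 - B ^ 2)) * hu
      rw [this]
      apply mul_nonneg <;> apply mul_nonneg <;> linarith
    exact (mul_nonneg_iff_of_pos_left (by positivity)).1 this
  refine ⟨u, √(A ^ 2 - u ^ 2), ?_, ?_⟩ <;> rw [Real.sq_sqrt hv]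
  · ring
  · linear_combination -hu

theorem IsCAT0.dist_geodesic_sq_le {X : Type*} [MetricSpace X] (hX : IsCAT0 X) {p q : X}
    {γ : ℝ → X} (hγ : IsGeodesicFrom p q γ) (z : X) {s : ℝ} (hs : s ∈ Icc (0 : ℝ) 1) :
    dist (γ (s * dist p q)) z ^ 2 ≤
      (1 - s) * dist p z ^ 2 + s * dist q z ^ 2 - s * (1 - s) * dist p q ^ 2 := by
  rcases (dist_nonneg : 0 ≤ dist p q).eq_or_lt with hD | hD
  · obtain rfl : p = q := dist_eq_zero.1 hD.symm
    rw [← hD, mul_zero, hγ.1]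
    linarith
  obtain ⟨u, v, hA, hB⟩ := exists_apex_of_triangle_inequalities hD
    (by simpa [dist_comm p q] using dist_triangle q p z) (dist_triangle p q z)
    (by simpa [dist_comm q z] using dist_triangle p z q)
  obtain ⟨γ₁₃, hγ₁₃⟩ := hX.1 p z
  obtain ⟨γ₂₃, hγ₂₃⟩ := hX.1 q z
  have hd₁₂ : dist !₂[0, 0] !₂[dist p q, 0] = dist p q := by simp [dist_vec2]
  have hd₁₃ : dist !₂[0, 0] !₂[u, v] = dist p z := by
    rw [dist_vec2, ← Real.sqrt_sq (dist_nonneg (x := p) (y := z)), ← hA]; ring_nf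
  have hd₂₃ : dist !₂[dist p q, 0] !₂[u, v] = dist q z := by
    rw [dist_vec2, ← Real.sqrt_sq (dist_nonneg (x := q) (y := z)), ← hB]; ring_nf
  have hcmp := (hX.2 p q z γ γ₁₃ γ₂₃ hγ hγ₁₃ hγ₂₃ _ _ _ hd₁₂ hd₁₃ hd₂₃).2.2.2.1 (s * dist p q)
    ⟨by nlinarith [hs.1], by nlinarith [hs.2]⟩ (dist p z) ⟨dist_nonneg, le_rfl⟩
  rw [hγ₁₃.2.1, ← hd₁₃, cmpPt_dist, cmpPt, hd₁₂, lineMap_vec2, dist_vec2,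
    mul_div_cancel_right₀ _ hD.ne', Real.le_sqrt dist_nonneg (by positivity)] at hcmp
  linear_combination hcmp + (1 - s) * hA + s * hB

theorem LowerSemicontinuous.exists_forall_le_of_midpoint_le {X : Type*} [MetricSpace X]
    [CompleteSpace X] [Nonempty X] {g : X → ℝ} (hg : LowerSemicontinuous g)
    (hbdd : BddBelow (range g))
    (hmid : ∀ p q, ∃ w, g w + dist p q ^ 2 / 4 ≤ (g p + g q) / 2) :
    ∃ y, ∀ z, g y ≤ g z := by
  obtain ⟨v, hv_anti, hv, hv_mem⟩ := exists_seq_tendsto_sInf (range_nonempty g) hbdd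
  choose y hy using hv_mem
  set m := sInf (range g)
  have hm : ∀ z, m ≤ g z := fun z => csInf_le hbdd ⟨z, rfl⟩
  have hdist : ∀ a b, dist (y a) (y b) ^ 2 ≤ 2 * (v a - m) + 2 * (v b - m) := fun a b => by
    obtain ⟨w, hw⟩ := hmid (y a) (y b)
    linarith [hm w, hy a, hy b]
  have hcauchy : CauchySeq y := by
    refine cauchySeq_of_le_tendsto_0 (fun N => √(4 * (v N - m))) (fun a b N ha hb => ?_) ?_
    · rw [Real.le_sqrt dist_nonneg (by linarith [hm (y N), hy N])]
      linarith [hdist a b, hv_anti ha, hv_anti hb]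
    · simpa using ((hv.sub_const m).const_mul 4).sqrt
  obtain ⟨y₀, hy₀⟩ := cauchySeq_tendsto_of_complete hcauchy
  refine ⟨y₀, fun z => le_trans ?_ (hm z)⟩
  by_contra! hlt
  obtain ⟨c, hmc, hcg⟩ := exists_between hlt
  obtain ⟨n, hcn, hnc⟩ :=
    ((hy₀.eventually (hg y₀ c hcg)).and (hv.eventually (gt_mem_nhds hmc))).exists
  rw [hy] at hcn
  exact lt_asymm hcn hnc

section SqDistExcess

variable {X : Type*} [MetricSpace X] {ι : Type*}

noncomputable def sqDistExcess (x : ι → X) (r : ι → ℝ) (y : X) : ℝ :=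
  ⨆ i, (dist y (x i) ^ 2 - 2 * r i ^ 2)

variable {x : ι → X} {r : ι → ℝ}

lemma bddAbove_range_dist_sq_sub (h : ∀ i j, dist (x i) (x j) ≤ r i + r j) [Nonempty ι]
    (y : X) : BddAbove (range fun i => dist y (x i) ^ 2 - 2 * r i ^ 2) := by
  obtain ⟨i₀⟩ := ‹Nonempty ι›
  refine ⟨2 * (dist y (x i₀) + r i₀) ^ 2, ?_⟩
  rintro _ ⟨i, rfl⟩
  have hyi : dist y (x i) ≤ dist y (x i₀) + r i₀ + r i := by
    linarith [dist_triangle y (x i₀) (x i), h i₀ i]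
  have hri : 0 ≤ r i := by linarith [h i i, dist_self (x i)]
  nlinarith [sq_nonneg (dist y (x i₀) + r i₀ - r i), dist_nonneg (x := y) (y := x i)]

lemma dist_sq_sub_le_sqDistExcess (h : ∀ i j, dist (x i) (x j) ≤ r i + r j) (y : X) (i : ι) :
    dist y (x i) ^ 2 - 2 * r i ^ 2 ≤ sqDistExcess x r y :=
  haveI : Nonempty ι := ⟨i⟩
  le_ciSup (bddAbove_range_dist_sq_sub h y) i

lemma lowerSemicontinuous_sqDistExcess (h : ∀ i j, dist (x i) (x j) ≤ r i + r j)
    [Nonempty ι] : LowerSemicontinuous (sqDistExcess x r) :=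
  lowerSemicontinuous_ciSup (bddAbove_range_dist_sq_sub h) fun _ =>
    ((continuous_id.dist continuous_const).pow 2 |>.sub continuous_const).lowerSemicontinuous

lemma bddBelow_range_sqDistExcess (h : ∀ i j, dist (x i) (x j) ≤ r i + r j) [Nonempty ι] :
    BddBelow (range (sqDistExcess x r)) := by
  obtain ⟨i₀⟩ := ‹Nonempty ι›
  refine ⟨-2 * r i₀ ^ 2, ?_⟩
  rintro _ ⟨y, rfl⟩
  nlinarith [dist_sq_sub_le_sqDistExcess h y i₀, sq_nonneg (dist y (x i₀))]

theorem IsCAT0.exists_sqDistExcess_midpoint_le (hX : IsCAT0 X)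
    (h : ∀ i j, dist (x i) (x j) ≤ r i + r j) [Nonempty ι] (p q : X) :
    ∃ w, sqDistExcess x r w + dist p q ^ 2 / 4 ≤
      (sqDistExcess x r p + sqDistExcess x r q) / 2 := by
  obtain ⟨γ, hγ⟩ := hX.1 p q
  refine ⟨γ (1 / 2 * dist p q), ?_⟩
  suffices sqDistExcess x r (γ (1 / 2 * dist p q)) ≤
      (sqDistExcess x r p + sqDistExcess x r q) / 2 - dist p q ^ 2 / 4 by linarith
  refine ciSup_le fun i => ?_
  have hCN := hX.dist_geodesic_sq_le hγ (x i) (s := 1 / 2) ⟨by norm_num, by norm_num⟩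
  linarith [dist_sq_sub_le_sqDistExcess h p i, dist_sq_sub_le_sqDistExcess h q i]

theorem IsCAT0.dist_geodesic_sq_sub_le (hX : IsCAT0 X)
    (h : ∀ i j, dist (x i) (x j) ≤ r i + r j) {y : X} {k : ι} {γ : ℝ → X}
    (hγ : IsGeodesicFrom y (x k) γ) {s : ℝ} (hs : s ∈ Icc (0 : ℝ) 1) (i : ι) :
    dist (γ (s * dist y (x k))) (x i) ^ 2 - 2 * r i ^ 2 ≤
      (1 - s) * (dist y (x i) ^ 2 - 2 * r i ^ 2) - s * (dist y (x k) ^ 2 - 2 * r k ^ 2) +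
        s ^ 2 * dist y (x k) ^ 2 := by
  have hki : dist (x k) (x i) ^ 2 ≤ 2 * r k ^ 2 + 2 * r i ^ 2 := by
    nlinarith [pow_le_pow_left₀ dist_nonneg (h k i) 2, sq_nonneg (r k - r i)]
  linarith [hX.dist_geodesic_sq_le hγ (x i) hs, mul_le_mul_of_nonneg_left hki hs.1]

theorem IsCAT0.exists_sqDistExcess_lt (hX : IsCAT0 X)
    (h : ∀ i j, dist (x i) (x j) ≤ r i + r j) [Nonempty ι] {y : X}
    (hy : 0 < sqDistExcess x r y) :
    ∃ y', sqDistExcess x r y' < sqDistExcess x r y := by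
  obtain ⟨k, hk⟩ := exists_lt_of_lt_ciSup hy
  obtain ⟨γ, hγ⟩ := hX.1 y (x k)
  set m := sqDistExcess x r y
  set a := dist y (x k)
  -- any `s ∈ (0, 1]` with `s * a ^ 2 < m` would do
  set s := m / (m + a ^ 2)
  have hs : 0 < s := by positivity
  have hsm : s * (m + a ^ 2) = m := div_mul_cancel₀ _ (by positivity)
  have hs1 : s ≤ 1 := by nlinarith [sq_nonneg a]
  have hgain : 0 < m + (a ^ 2 - 2 * r k ^ 2) - s * a ^ 2 := by nlinarith
  refine ⟨γ (s * a), lt_of_le_of_lt (ciSup_le fun i => ?_) (sub_lt_self m (mul_pos hs hgain))⟩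
  have := hX.dist_geodesic_sq_sub_le h hγ ⟨hs.le, hs1⟩ i
  nlinarith [dist_sq_sub_le_sqDistExcess h y i]

end SqDistExcess

theorem stmt4_general {X : Type*} [MetricSpace X] [CompleteSpace X] [Nonempty X]
    (hX : IsCAT0 X) {ι : Type*} (x : ι → X) (r : ι → ℝ)
    (h : ∀ i j, dist (x i) (x j) ≤ r i + r j) :
    (⋂ i, Metric.closedBall (x i) (Real.sqrt 2 * r i)).Nonempty := by
  rcases isEmpty_or_nonempty ι with _ | _
  · simp
  obtain ⟨y, hy_min⟩ := (lowerSemicontinuous_sqDistExcess h).exists_forall_le_of_midpoint_le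
    (bddBelow_range_sqDistExcess h) (hX.exists_sqDistExcess_midpoint_le h)
  have hy : sqDistExcess x r y ≤ 0 := not_lt.1 fun hpos =>
    let ⟨y', hy'⟩ := hX.exists_sqDistExcess_lt h hpos
    not_lt_of_ge (hy_min y') hy'
  refine ⟨y, mem_iInter.2 fun i => Metric.mem_closedBall.2 ?_⟩
  have hr : 0 ≤ r i := by linarith [h i i, dist_self (x i)]
  rw [← pow_le_pow_iff_left₀ dist_nonneg (by positivity) two_ne_zero, mul_pow,
    Real.sq_sqrt zero_le_two]
  linarith [dist_sq_sub_le_sqDistExcess h y i]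

/-- Every complete CAT(0) space is √2-hyperconvex. -/
theorem stmt4 {X : Type*} [MetricSpace X] [CompleteSpace X] [Nonempty X]
    (hX : IsCAT0 X) {ι : Type*} (x : ι → X) (r : ι → ℝ) (hr : ∀ i, 0 < r i)
    (h : ∀ i j, dist (x i) (x j) ≤ r i + r j) :
    (⋂ i, Metric.closedBall (x i) (Real.sqrt 2 * r i)).Nonempty :=
  stmt4_general hX x r h
end

section
/- Let (Xᵢ,dᵢ)_{i∈I} be a family of metric spaces, each satisfying the tripod condition, and fix base points zᵢ ∈ Xᵢ. Let X be the ℓ¹ product, i.e. the set of all families (xᵢ)_{i∈I} with xᵢ ∈ Xᵢ and Σ_{i∈I} dᵢ(xᵢ,zᵢ) < ∞, equipped with the metric d₁((xᵢ),(yᵢ)) := Σ_{i∈I} dᵢ(xᵢ,yᵢ). Then (X,d₁) satisfies the tripod condition: any three points x,y,w ∈ X admit a point q ∈ X with d₁(x,q)+d₁(q,y)=d₁(x,y), d₁(x,q)+d₁(q,w)=d₁(x,w) and d₁(y,q)+d₁(q,w)=d₁(y,w). -/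
/-- The ℓ¹ product of a family of metric spaces with base points `z i`:
families `(x i)` with `∑ dist (x i) (z i) < ∞`.  Its metric is
`d₁ x y = ∑' i, dist (x i) (y i)` (valued via `tsum`, which is a genuine finite
sum here since summability follows from the triangle inequality). -/
def L1Prod {I : Type*} (X : I → Type*) [∀ i, MetricSpace (X i)] (z : ∀ i, X i) :=
  {f : ∀ i, X i // Summable fun i => dist (f i) (z i)}

/-- The ℓ¹-product distance. -/
noncomputable def l1dist {I : Type*} {X : I → Type*} [∀ i, MetricSpace (X i)]
    {z : ∀ i, X i} (f g : L1Prod X z) : ℝ :=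
  ∑' i, dist (f.1 i) (g.1 i)

lemma summable_dist_aux {I : Type*} {X : I → Type*} [∀ i, MetricSpace (X i)]
    {z : ∀ i, X i} (f g : L1Prod X z) :
    Summable fun i => dist (f.1 i) (g.1 i) := by
  refine Summable.of_nonneg_of_le (fun i => dist_nonneg) (fun i => ?_) (f.2.add g.2)
  calc dist (f.1 i) (g.1 i) ≤ dist (f.1 i) (z i) + dist (z i) (g.1 i) := dist_triangle _ _ _
    _ = dist (f.1 i) (z i) + dist (g.1 i) (z i) := by rw [dist_comm (z i)]

/-- The ℓ¹ product of a family of tripod spaces is a tripod space. -/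
theorem stmt7 {I : Type*} {X : I → Type*} [∀ i, MetricSpace (X i)]
    (htripod : ∀ i, TripodCond (X i)) (z : ∀ i, X i)
    (x y w : L1Prod X z) :
    ∃ q : L1Prod X z,
      l1dist x q + l1dist q y = l1dist x y ∧
      l1dist x q + l1dist q w = l1dist x w ∧
      l1dist y q + l1dist q w = l1dist y w := by
  choose m h1 h2 h3 using fun i => htripod i (x.1 i) (y.1 i) (w.1 i)
  have hxq : Summable fun i => dist (x.1 i) (m i) := by
    refine Summable.of_nonneg_of_le (fun i => dist_nonneg) (fun i => ?_)
      (summable_dist_aux x y)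
    rw [← h1 i]; linarith [dist_nonneg (x := y.1 i) (y := m i)]
  have hqz : Summable fun i => dist (m i) (z i) := by
    refine Summable.of_nonneg_of_le (fun i => dist_nonneg) (fun i => ?_) (hxq.add x.2)
    calc dist (m i) (z i) ≤ dist (m i) (x.1 i) + dist (x.1 i) (z i) := dist_triangle _ _ _
      _ = dist (x.1 i) (m i) + dist (x.1 i) (z i) := by rw [dist_comm]
  refine ⟨⟨m, hqz⟩, ?_, ?_, ?_⟩ <;> unfold l1dist <;> simp only
  · rw [← Summable.tsum_add hxq (by simpa [dist_comm] using
      (summable_dist_aux y (⟨m, hqz⟩ : L1Prod X z)))]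
    exact tsum_congr fun i => by rw [dist_comm (m i)]; exact h1 i
  · rw [← Summable.tsum_add hxq (by simpa [dist_comm] using
      (summable_dist_aux w (⟨m, hqz⟩ : L1Prod X z)))]
    exact tsum_congr fun i => by rw [dist_comm (m i)]; exact h2 i
  · have hyq : Summable fun i => dist (y.1 i) (m i) :=
      summable_dist_aux y (⟨m, hqz⟩ : L1Prod X z)
    rw [← Summable.tsum_add hyq (by simpa [dist_comm] using
      (summable_dist_aux w (⟨m, hqz⟩ : L1Prod X z)))]
    exact tsum_congr fun i => by rw [dist_comm (m i)]; exact h3 i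
end

section
/- Let (X,d) be a complete geodesic metric space satisfying the tripod condition, and let c₀,c₁:[0,1]→X be two shortest geodesics (parametrized proportionally to arclength) with the same endpoints c₀(0)=c₁(0)=x₀ and c₀(1)=c₁(1)=x₁. Then there exists a geodesic homotopy between c₀ and c₁: a continuous map c:[0,1]×[0,1]→X with c(t,0)=c₀(t) and c(t,1)=c₁(t) for all t, such that for every s ∈ [0,1] the curve t ↦ c(t,s) is a shortest geodesic from x₀ to x₁ (i.e., of length d(x₀,x₁) and parametrized proportionally to arclength). -/
/-- A shortest geodesic from `x₀` to `x₁`, parametrized proportionally to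
arclength on `[0,1]`. -/
def PropGeodesic {X : Type*} [MetricSpace X] (x₀ x₁ : X) (c : ℝ → X) : Prop :=
  c 0 = x₀ ∧ c 1 = x₁ ∧
    ∀ s ∈ Set.Icc (0:ℝ) 1, ∀ t ∈ Set.Icc (0:ℝ) 1,
      dist (c s) (c t) = |s - t| * dist x₀ x₁


/-!
Two geodesics `u, v` (parametrized on `[0,1]`) that agree outside a time window `(α, β)` are
joined by a chain of six geodesics in which neighbours agree outside windows of width
`2/3 (β - α)`. Trisect the window at `τ₁ < τ₂`. The tripod condition gives a median `q₂` of
`u τ₂, v τ₂, u β` and a median `q₁` of `u τ₁, v τ₁, q₂`; then `u α → q₁ → q₂ → u β` is again a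
geodesic, reached from `u τᵢ` and from `v τᵢ` along geodesics. Switching `u` onto it at `τ₂`, then
at `τ₁`, then at `α` (where `u` and `v` coincide), and back out along `v` at `τ₁` and `τ₂`, gives
the chain.

Iterating, level `n` is a chain of `6ⁿ + 1` geodesics from `c₀` to `c₁` whose neighbours are
`2 (2/3)ⁿ d(x₀, x₁)`-close, and every sixth member of level `n + 1` is a member of level `n`. The
homotopy at time `s` is the limit of the `⌊s 6ⁿ⌋`-th geodesics of level `n`: these converge
geometrically, limits of geodesics are geodesics, and parameters `s` closer than `6⁻ⁿ` give curves
`62 (2/3)ⁿ d(x₀, x₁)`-close. Continuity in `s` together with the uniform Lipschitz bound in `t`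
gives joint continuity.
-/

open Set Filter
open scoped NNReal Topology

section Curves

variable {X : Type*}

noncomputable def glueAt (f g : ℝ → X) (p : ℝ) : ℝ → X := fun t => if t ≤ p then f t else g t

theorem glueAt_of_le {f g : ℝ → X} {p t : ℝ} (ht : t ≤ p) : glueAt f g p t = f t := if_pos ht

theorem glueAt_of_ge {f g : ℝ → X} {p t : ℝ} (hfg : f p = g p) (ht : p ≤ t) :
    glueAt f g p t = g t := by
  rcases ht.eq_or_lt with rfl | ht
  · exact (glueAt_of_le le_rfl).trans hfg
  · exact if_neg ht.not_ge

variable [MetricSpace X]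

theorem LipschitzOnWith.union_Icc {F : ℝ → X} {K : ℝ≥0} {a p b : ℝ}
    (h₁ : LipschitzOnWith K F (Icc a p)) (h₂ : LipschitzOnWith K F (Icc p b)) :
    LipschitzOnWith K F (Icc a b) := by
  have hF : ∀ x ∈ Icc a b, ∀ y ∈ Icc a b, x ≤ y → dist (F x) (F y) ≤ K * dist x y := by
    intro x hx y hy hxy
    rcases le_total y p with hyp | hpy
    · exact h₁.dist_le_mul x ⟨hx.1, hxy.trans hyp⟩ y ⟨hx.1.trans hxy, hyp⟩
    rcases le_total p x with hpx | hxp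
    · exact h₂.dist_le_mul x ⟨hpx, hxy.trans hy.2⟩ y ⟨hpy, hy.2⟩
    calc dist (F x) (F y) ≤ dist (F x) (F p) + dist (F p) (F y) := dist_triangle _ _ _
      _ ≤ K * dist x p + K * dist p y :=
        add_le_add (h₁.dist_le_mul x ⟨hx.1, hxp⟩ p ⟨hx.1.trans hxp, le_rfl⟩)
          (h₂.dist_le_mul p ⟨le_rfl, hpy.trans hy.2⟩ y ⟨hpy, hy.2⟩)
      _ = K * dist x y := by
        simp only [Real.dist_eq, abs_of_nonpos (sub_nonpos.2 hxp),
          abs_of_nonpos (sub_nonpos.2 hpy), abs_of_nonpos (sub_nonpos.2 hxy)]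
        ring
  refine LipschitzOnWith.of_dist_le_mul fun x hx y hy => ?_
  rcases le_total x y with hxy | hyx
  · exact hF x hx y hy hxy
  · rw [dist_comm, dist_comm x]
    exact hF y hy x hx hyx

theorem LipschitzOnWith.glueAt {f g : ℝ → X} {K : ℝ≥0} {a p b : ℝ}
    (hf : LipschitzOnWith K f (Icc a p)) (hg : LipschitzOnWith K g (Icc p b)) (hfg : f p = g p) :
    LipschitzOnWith K (_root_.glueAt f g p) (Icc a b) := by
  refine LipschitzOnWith.union_Icc (p := p) (fun x hx y hy => ?_) (fun x hx y hy => ?_)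
  · rw [glueAt_of_le hx.2, glueAt_of_le hy.2]
    exact hf hx hy
  · rw [glueAt_of_ge hfg hx.1, glueAt_of_ge hfg hy.1]
    exact hg hx hy

variable {x₀ x₁ : X} {c g R : ℝ → X}

theorem PropGeodesic.dist_eq (hc : PropGeodesic x₀ x₁ c) {s t : ℝ} (hs : 0 ≤ s) (hst : s ≤ t)
    (ht : t ≤ 1) : dist (c s) (c t) = (t - s) * dist x₀ x₁ := by
  rw [hc.2.2 s ⟨hs, hst.trans ht⟩ t ⟨hs.trans hst, ht⟩, abs_of_nonpos (sub_nonpos.2 hst), neg_sub]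

theorem PropGeodesic.lipschitzOnWith (hc : PropGeodesic x₀ x₁ c) :
    LipschitzOnWith (nndist x₀ x₁) c (Icc 0 1) :=
  LipschitzOnWith.of_dist_le_mul fun s hs t ht => by
    rw [hc.2.2 s hs t ht, coe_nndist, Real.dist_eq, mul_comm]

theorem PropGeodesic.of_lipschitzOnWith (h0 : c 0 = x₀) (h1 : c 1 = x₁)
    (hc : LipschitzOnWith (nndist x₀ x₁) c (Icc 0 1)) : PropGeodesic x₀ x₁ c := by
  have hle : ∀ s ∈ Icc (0:ℝ) 1, ∀ t ∈ Icc (0:ℝ) 1, s ≤ t →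
      dist (c s) (c t) ≤ (t - s) * dist x₀ x₁ := fun s hs t ht hst => by
    simpa [coe_nndist, Real.dist_eq, abs_of_nonpos (sub_nonpos.2 hst), mul_comm]
      using hc.dist_le_mul s hs t ht
  -- Going from `c 0` to `c 1` through `c s` and `c t` leaves no slack in any of the three bounds.
  have heq : ∀ s ∈ Icc (0:ℝ) 1, ∀ t ∈ Icc (0:ℝ) 1, s ≤ t →
      dist (c s) (c t) = (t - s) * dist x₀ x₁ := fun s hs t ht hst => by
    have h0s := hle 0 ⟨le_rfl, zero_le_one⟩ s hs hs.1
    have ht1 := hle t ht 1 ⟨zero_le_one, le_rfl⟩ ht.2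
    have := dist_triangle4 (c 0) (c s) (c t) (c 1)
    rw [h0] at this h0s
    rw [h1] at this ht1
    linarith [hle s hs t ht hst]
  refine ⟨h0, h1, fun s hs t ht => ?_⟩
  rcases le_total s t with hst | hts
  · rw [heq s hs t ht hst, abs_of_nonpos (sub_nonpos.2 hst), neg_sub]
  · rw [dist_comm, heq t ht s hs hts, abs_of_nonneg (sub_nonneg.2 hts)]

theorem PropGeodesic.glueAt (hg : PropGeodesic x₀ x₁ g) {p : ℝ} (hp0 : 0 ≤ p) (hp1 : p ≤ 1)
    (hR : LipschitzOnWith (nndist x₀ x₁) R (Icc p 1)) (hRp : g p = R p) (hR1 : R 1 = x₁) :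
    PropGeodesic x₀ x₁ (glueAt g R p) :=
  .of_lipschitzOnWith (by rw [glueAt_of_le hp0, hg.1]) (by rw [glueAt_of_ge hRp hp1, hR1])
    ((hg.lipschitzOnWith.mono (Icc_subset_Icc le_rfl hp1)).glueAt hR hRp)

theorem PropGeodesic.of_tendsto {f : ℕ → ℝ → X} (hf : ∀ n, PropGeodesic x₀ x₁ (f n))
    (hlim : ∀ t ∈ Icc (0:ℝ) 1, Tendsto (fun n => f n t) atTop (𝓝 (c t))) :
    PropGeodesic x₀ x₁ c := by
  have h01 : (0:ℝ) ∈ Icc (0:ℝ) 1 := ⟨le_rfl, zero_le_one⟩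
  have h11 : (1:ℝ) ∈ Icc (0:ℝ) 1 := ⟨zero_le_one, le_rfl⟩
  refine ⟨tendsto_nhds_unique (hlim 0 h01) ?_, tendsto_nhds_unique (hlim 1 h11) ?_,
    fun s hs t ht => tendsto_nhds_unique ((hlim s hs).dist (hlim t ht)) ?_⟩
  · simp only [fun n => (hf n).1, tendsto_const_nhds]
  · simp only [fun n => (hf n).2.1, tendsto_const_nhds]
  · simp only [fun n => (hf n).2.2 s hs t ht, tendsto_const_nhds]

theorem PropGeodesic.dist_le_of_eq {u v : ℝ → X} (hu : PropGeodesic x₀ x₁ u)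
    (hv : PropGeodesic x₀ x₁ v) {a t : ℝ} (hva : v a = u a) (ha : 0 ≤ a) (hat : a ≤ t)
    (ht : t ≤ 1) : dist (u t) (v t) ≤ 2 * (t - a) * dist x₀ x₁ := by
  have := dist_triangle (u t) (u a) (v t)
  rw [dist_comm (u t) (u a), hu.dist_eq ha hat ht, ← hva, hv.dist_eq ha hat ht] at this
  linarith

theorem GeodesicSpace.exists_segment (hgeo : GeodesicSpace X) (x y : X) {K : ℝ≥0} {p q : ℝ}
    (hd : dist x y = (q - p) * K) :
    ∃ σ : ℝ → X, σ p = x ∧ σ q = y ∧ LipschitzOnWith K σ (Icc p q) := by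
  obtain ⟨γ, hγ0, hγ1, hγ⟩ := hgeo x y
  have hmem : ∀ t ∈ Icc p q, (t - p) * K ∈ Icc 0 (dist x y) := fun t ht =>
    ⟨mul_nonneg (sub_nonneg.2 ht.1) K.2, hd ▸ mul_le_mul_of_nonneg_right (by linarith [ht.2]) K.2⟩
  refine ⟨fun t => γ ((t - p) * K), by simpa using hγ0, by simpa [← hd] using hγ1, ?_⟩
  refine LipschitzOnWith.of_dist_le_mul fun s hs t ht => le_of_eq ?_
  rw [hγ _ (hmem s hs) _ (hmem t ht), ← sub_mul, sub_sub_sub_cancel_right, abs_mul,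
    NNReal.abs_eq, Real.dist_eq, mul_comm]

theorem GeodesicSpace.exists_prepend (hgeo : GeodesicSpace X) {R : ℝ → X} {K : ℝ≥0}
    {p q b : ℝ} (x : X) (hpq : p ≤ q) (hR : LipschitzOnWith K R (Icc q b))
    (hx : dist x (R q) = (q - p) * K) :
    ∃ R' : ℝ → X, LipschitzOnWith K R' (Icc p b) ∧ R' p = x ∧ ∀ t, q ≤ t → R' t = R t := by
  obtain ⟨σ, hσp, hσq, hσ⟩ := hgeo.exists_segment x (R q) hx
  exact ⟨glueAt σ R q, hσ.glueAt hR hσq, by rw [glueAt_of_le hpq, hσp],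
    fun t ht => glueAt_of_ge hσq ht⟩

end Curves

section Medians

variable {X : Type*} [MetricSpace X]

def IsMedian (a b c m : X) : Prop :=
  dist a m + dist b m = dist a b ∧ dist a m + dist c m = dist a c ∧ dist b m + dist c m = dist b c

variable {x₀ x₁ : X} {u v : ℝ → X}

theorem PropGeodesic.dist_isMedian (hu : PropGeodesic x₀ x₁ u) (hv : PropGeodesic x₀ x₁ v)
    {p p' π β : ℝ} {Q : X} (hvβ : v β = u β) (hp : 0 ≤ p) (hpp' : p ≤ p') (hp'β : p' ≤ β)
    (hβ : β ≤ 1) (hπ : (π - p') * dist x₀ x₁ = dist (u p') (v p') / 2)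
    (hQ : IsMedian (u p') (v p') (u β) Q) :
    dist (u p) Q = (π - p) * dist x₀ x₁ ∧ dist (v p) Q = (π - p) * dist x₀ x₁ ∧
      dist Q (u β) = (β - π) * dist x₀ x₁ := by
  obtain ⟨h₁, h₂, h₃⟩ := hQ
  have huβ := hu.dist_eq (hp.trans hpp') hp'β hβ
  have hvβ' := hv.dist_eq (hp.trans hpp') hp'β hβ
  rw [hvβ] at hvβ'
  have hQβ : dist Q (u β) = (β - π) * dist x₀ x₁ := by rw [dist_comm]; linarith
  have side : ∀ w : ℝ → X, PropGeodesic x₀ x₁ w → w β = u β →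
      dist (w p') Q = (π - p') * dist x₀ x₁ → dist (w p) Q = (π - p) * dist x₀ x₁ := by
    intro w hw hwβ hwQ
    have e₁ := hw.dist_eq hp hpp' (hp'β.trans hβ)
    have e₂ := hw.dist_eq hp (hpp'.trans hp'β) hβ
    rw [hwβ] at e₂
    linarith [dist_triangle (w p) (w p') Q, dist_triangle (w p) Q (u β)]
  exact ⟨side u hu rfl (by linarith), side v hv hvβ (by linarith), hQβ⟩

theorem PropGeodesic.isMedian_of_isMedian (hu : PropGeodesic x₀ x₁ u)
    (hv : PropGeodesic x₀ x₁ v) {p p' π π' β : ℝ} {Q M : X} (hvβ : v β = u β) (hp : 0 ≤ p)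
    (hpp' : p ≤ p') (hp'β : p' ≤ β) (hβ : β ≤ 1)
    (hπ' : (π' - p') * dist x₀ x₁ = dist (u p') (v p') / 2)
    (hπ : (π - p) * dist x₀ x₁ = dist (u p) (v p) / 2)
    (hQ : IsMedian (u p') (v p') (u β) Q) (hM : IsMedian (u p) (v p) Q M) :
    IsMedian (u p) (v p) (u β) M ∧ dist M Q = (π' - π) * dist x₀ x₁ := by
  obtain ⟨huQ, hvQ, hQβ⟩ := hu.dist_isMedian hv hvβ hp hpp' hp'β hβ hπ' hQ
  obtain ⟨m₁, m₂, m₃⟩ := hM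
  have huβ := hu.dist_eq hp (hpp'.trans hp'β) hβ
  have hvβ' := hv.dist_eq hp (hpp'.trans hp'β) hβ
  rw [hvβ] at hvβ'
  have hMQ : dist M Q = (π' - π) * dist x₀ x₁ := by rw [dist_comm]; linarith
  have hMβ := dist_triangle M Q (u β)
  refine ⟨⟨m₁, ?_, ?_⟩, hMQ⟩
  · linarith [dist_triangle (u p) M (u β), dist_comm M (u β)]
  · linarith [dist_triangle (v p) M (u β), dist_comm M (u β)]

theorem PropGeodesic.exists_branch_points (htri : TripodCond X) (hu : PropGeodesic x₀ x₁ u)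
    (hv : PropGeodesic x₀ x₁ v) {α τ₁ τ₂ β : ℝ} (hvα : v α = u α) (hvβ : v β = u β)
    (hα : 0 ≤ α) (hατ₁ : α ≤ τ₁) (hτ : τ₁ - α ≤ τ₂ - τ₁) (hτ₂β : τ₂ ≤ β) (hβ : β ≤ 1)
    (hD : 0 < dist x₀ x₁) :
    ∃ q₁ q₂ : X, ∃ π₁ π₂ : ℝ, τ₁ ≤ π₁ ∧ π₁ ≤ τ₂ ∧ τ₂ ≤ π₂ ∧ π₂ ≤ β ∧
      dist (u α) q₁ = (π₁ - α) * dist x₀ x₁ ∧ dist q₁ q₂ = (π₂ - π₁) * dist x₀ x₁ ∧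
      dist q₂ (u β) = (β - π₂) * dist x₀ x₁ ∧
      dist (u τ₁) q₁ = (π₁ - τ₁) * dist x₀ x₁ ∧ dist (v τ₁) q₁ = (π₁ - τ₁) * dist x₀ x₁ ∧
      dist (u τ₂) q₂ = (π₂ - τ₂) * dist x₀ x₁ ∧ dist (v τ₂) q₂ = (π₂ - τ₂) * dist x₀ x₁ := by
  set D := dist x₀ x₁
  have hτ₁₂ : τ₁ ≤ τ₂ := by linarith
  obtain ⟨q₂, hq₂⟩ : ∃ m, IsMedian (u τ₂) (v τ₂) (u β) m := htri _ _ _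
  obtain ⟨q₁, hq₁⟩ : ∃ m, IsMedian (u τ₁) (v τ₁) q₂ m := htri _ _ _
  have hπ : ∀ τ, (τ + dist (u τ) (v τ) / 2 / D - τ) * D = dist (u τ) (v τ) / 2 := fun τ => by
    field_simp; ring
  set π₁ := τ₁ + dist (u τ₁) (v τ₁) / 2 / D
  set π₂ := τ₂ + dist (u τ₂) (v τ₂) / 2 / D
  obtain ⟨hq₁', hq₁q₂⟩ := hu.isMedian_of_isMedian hv hvβ (hα.trans hατ₁) hτ₁₂ hτ₂β hβ
    (hπ τ₂) (hπ τ₁) hq₂ hq₁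
  obtain ⟨hu₂, hv₂, hq₂β⟩ := hu.dist_isMedian hv hvβ (hα.trans (hατ₁.trans hτ₁₂)) le_rfl hτ₂β hβ
    (hπ τ₂) hq₂
  obtain ⟨hu₁, hv₁, -⟩ := hu.dist_isMedian hv hvβ (hα.trans hατ₁) le_rfl (hτ₁₂.trans hτ₂β) hβ
    (hπ τ₁) hq₁'
  obtain ⟨huα, -, -⟩ := hu.dist_isMedian hv hvβ hα hατ₁ (hτ₁₂.trans hτ₂β) hβ (hπ τ₁) hq₁'
  have hgap := hu.dist_le_of_eq hv hvα hα hατ₁ (hτ₁₂.trans (hτ₂β.trans hβ))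
  refine ⟨q₁, q₂, π₁, π₂, ?_, ?_, ?_, ?_, huα, hq₁q₂, hq₂β, hu₁, hv₁, hu₂, hv₂⟩
  · simp only [π₁, le_add_iff_nonneg_right]; positivity
  · have : dist (u τ₁) (v τ₁) / 2 / D ≤ τ₁ - α := by rw [div_le_iff₀ hD]; linarith
    simp only [π₁]; linarith
  · simp only [π₂, le_add_iff_nonneg_right]; positivity
  · have := (mul_nonneg_iff_of_pos_right hD).1 (dist_nonneg.trans_eq hq₂β)
    linarith

end Medians

section Surgery

variable {X : Type*}

def AgreeOffWindow (u v : ℝ → X) (w : ℝ) : Prop :=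
  ∃ a b : ℝ, 0 ≤ a ∧ a ≤ b ∧ b ≤ 1 ∧ b - a ≤ w ∧ EqOn u v (Icc 0 1 \ Ioo a b)

def IsSplice (S g T : ℝ → X) (a b : ℝ) : Prop :=
  EqOn S g (Icc 0 a) ∧ EqOn S T (Icc b 1)

variable {u v : ℝ → X} {w : ℝ}

theorem AgreeOffWindow.symm (h : AgreeOffWindow u v w) : AgreeOffWindow v u w :=
  let ⟨a, b, ha, hab, hb, hw, heq⟩ := h
  ⟨a, b, ha, hab, hb, hw, heq.symm⟩

theorem AgreeOffWindow.mono (h : AgreeOffWindow u v w) {w' : ℝ} (hww' : w ≤ w') :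
    AgreeOffWindow u v w' :=
  let ⟨a, b, ha, hab, hb, hw, heq⟩ := h
  ⟨a, b, ha, hab, hb, hw.trans hww', heq⟩

theorem agreeOffWindow_of_eqOn (h : EqOn u v (Icc 0 1)) (hw : 0 ≤ w) : AgreeOffWindow u v w :=
  ⟨0, 0, le_rfl, le_rfl, zero_le_one, by simpa using hw, h.mono sdiff_subset⟩

theorem IsSplice.agreeOffWindow {S₁ S₂ g T : ℝ → X} {a₁ b₁ a₂ b₂ : ℝ}
    (h₁ : IsSplice S₁ g T a₁ b₁) (h₂ : IsSplice S₂ g T a₂ b₂) (ha : a₂ ≤ a₁) (hb : b₂ ≤ b₁)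
    (ha₂ : 0 ≤ a₂) (hab : a₂ ≤ b₁) (hb₁ : b₁ ≤ 1) (hw : b₁ - a₂ ≤ w) :
    AgreeOffWindow S₁ S₂ w := by
  refine ⟨a₂, b₁, ha₂, hab, hb₁, hw, fun t ⟨ht, htw⟩ => ?_⟩
  rcases le_or_gt t a₂ with hta | hta
  · exact (h₁.1 ⟨ht.1, hta.trans ha⟩).trans (h₂.1 ⟨ht.1, hta⟩).symm
  · have hbt : b₁ ≤ t := not_lt.1 fun h => htw ⟨hta, h⟩
    exact (h₁.2 ⟨hbt, ht.2⟩).trans (h₂.2 ⟨hb.trans hbt, ht.2⟩).symm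

variable [MetricSpace X] {x₀ x₁ : X}

theorem AgreeOffWindow.dist_le (h : AgreeOffWindow u v w) (hu : PropGeodesic x₀ x₁ u)
    (hv : PropGeodesic x₀ x₁ v) {t : ℝ} (ht : t ∈ Icc (0:ℝ) 1) :
    dist (u t) (v t) ≤ 2 * w * dist x₀ x₁ := by
  obtain ⟨a, b, ha, hab, hb, hw, heq⟩ := h
  by_cases htw : t ∈ Ioo a b
  · have hva : v a = u a := (heq ⟨⟨ha, hab.trans hb⟩, fun h => lt_irrefl a h.1⟩).symm
    have := hu.dist_le_of_eq hv hva ha htw.1.le ht.2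
    have : (t - a) * dist x₀ x₁ ≤ w * dist x₀ x₁ := by gcongr; linarith [htw.2]
    linarith
  · rw [heq ⟨ht, htw⟩, dist_self]
    have : 0 ≤ w := by linarith
    positivity

theorem PropGeodesic.exists_tail (hgeo : GeodesicSpace X) {u : ℝ → X}
    (hu : PropGeodesic x₀ x₁ u) {α π₁ π₂ β : ℝ} {q₁ q₂ : X} (hα : 0 ≤ α) (hαπ₁ : α ≤ π₁)
    (hπ₁₂ : π₁ ≤ π₂) (hπ₂β : π₂ ≤ β) (d₀₁ : dist (u α) q₁ = (π₁ - α) * dist x₀ x₁)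
    (d₁₂ : dist q₁ q₂ = (π₂ - π₁) * dist x₀ x₁) (d₂ : dist q₂ (u β) = (β - π₂) * dist x₀ x₁) :
    ∃ T : ℝ → X, LipschitzOnWith (nndist x₀ x₁) T (Icc α 1) ∧ T α = u α ∧ T π₁ = q₁ ∧
      T π₂ = q₂ ∧ EqOn T u (Icc β 1) := by
  have hu' := hu.lipschitzOnWith.mono (Icc_subset_Icc (by linarith) le_rfl : Icc β 1 ⊆ Icc 0 1)
  obtain ⟨R₂, hR₂, hR₂π₂, hR₂u⟩ := hgeo.exists_prepend q₂ hπ₂β hu' (by rwa [coe_nndist])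
  obtain ⟨R₁, hR₁, hR₁π₁, hR₁R₂⟩ :=
    hgeo.exists_prepend q₁ hπ₁₂ hR₂ (by rwa [hR₂π₂, coe_nndist])
  obtain ⟨T, hT, hTα, hTR₁⟩ := hgeo.exists_prepend (u α) hαπ₁ hR₁ (by rwa [hR₁π₁, coe_nndist])
  refine ⟨T, hT, hTα, by rw [hTR₁ _ le_rfl, hR₁π₁], by rw [hTR₁ _ hπ₁₂, hR₁R₂ _ le_rfl, hR₂π₂],
    fun t ht => ?_⟩
  rw [hTR₁ t (by linarith [ht.1]), hR₁R₂ t (by linarith [ht.1]), hR₂u t ht.1]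

theorem PropGeodesic.exists_detour (hgeo : GeodesicSpace X) {g T : ℝ → X}
    (hg : PropGeodesic x₀ x₁ g) {τ π : ℝ} (hτ : 0 ≤ τ) (hτπ : τ ≤ π) (hπ : π ≤ 1)
    (hT : LipschitzOnWith (nndist x₀ x₁) T (Icc π 1)) (hT1 : T 1 = x₁)
    (hd : dist (g τ) (T π) = (π - τ) * dist x₀ x₁) :
    ∃ S : ℝ → X, PropGeodesic x₀ x₁ S ∧ IsSplice S g T τ π := by
  obtain ⟨R, hR, hRτ, hRT⟩ := hgeo.exists_prepend (g τ) hτπ hT (by rwa [coe_nndist])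
  refine ⟨_root_.glueAt g R τ, hg.glueAt hτ (hτπ.trans hπ) hR hRτ.symm (by rw [hRT 1 hπ, hT1]),
    fun t ht => glueAt_of_le ht.2, fun t ht => ?_⟩
  rw [glueAt_of_ge hRτ.symm (hτπ.trans ht.1), hRT t ht.1]

theorem PropGeodesic.exists_chain_of_lt (hgeo : GeodesicSpace X) (htri : TripodCond X)
    (hu : PropGeodesic x₀ x₁ u) (hv : PropGeodesic x₀ x₁ v) {α β : ℝ} (hα : 0 ≤ α)
    (hαβ : α < β) (hβ : β ≤ 1) (hD : 0 < dist x₀ x₁) (huv : EqOn u v (Icc 0 1 \ Ioo α β)) :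
    ∃ E : ℕ → ℝ → X, E 0 = u ∧ E 6 = v ∧
      ∀ i < 6, PropGeodesic x₀ x₁ (E i) ∧ AgreeOffWindow (E i) (E (i + 1)) (2 / 3 * (β - α)) := by
  have hout : ∀ t ∈ Icc (0:ℝ) 1, t ≤ α ∨ β ≤ t → u t = v t := fun t ht h =>
    huv ⟨ht, fun hw => h.elim (fun h' => by linarith [hw.1]) (fun h' => by linarith [hw.2])⟩
  have hvα : v α = u α := (hout α ⟨hα, by linarith⟩ (.inl le_rfl)).symm
  have hvβ : v β = u β := (hout β ⟨by linarith, hβ⟩ (.inr le_rfl)).symm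
  set τ₁ := α + (β - α) / 3 with hτ₁
  set τ₂ := α + 2 * (β - α) / 3 with hτ₂
  obtain ⟨q₁, q₂, π₁, π₂, hτπ₁, hπ₁τ, hτπ₂, hπ₂β, d₀₁, d₁₂, d₂, du₁, dv₁, du₂, dv₂⟩ :=
    hu.exists_branch_points htri hv (τ₁ := τ₁) (τ₂ := τ₂) hvα hvβ hα (by linarith)
      (by linarith) (by linarith) hβ hD
  obtain ⟨T, hT, hTα, hTπ₁, hTπ₂, hTu⟩ :=
    hu.exists_tail hgeo hα (by linarith) (by linarith) hπ₂β d₀₁ d₁₂ d₂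
  have hT1 : T 1 = x₁ := by rw [hTu ⟨hβ, le_rfl⟩, hu.2.1]
  have hT' : ∀ {π}, α ≤ π → LipschitzOnWith (nndist x₀ x₁) T (Icc π 1) := fun h =>
    hT.mono (Icc_subset_Icc h le_rfl)
  obtain ⟨U₂, hU₂, sU₂⟩ := hu.exists_detour hgeo (by linarith) hτπ₂ (by linarith)
    (hT' (by linarith)) hT1 (by rw [hTπ₂, du₂])
  obtain ⟨U₁, hU₁, sU₁⟩ := hu.exists_detour hgeo (by linarith) hτπ₁ (by linarith)
    (hT' (by linarith)) hT1 (by rw [hTπ₁, du₁])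
  obtain ⟨U₀, hU₀, sU₀⟩ := hu.exists_detour hgeo hα le_rfl (by linarith) (hT' le_rfl) hT1
    (by rw [hTα, dist_self, sub_self, zero_mul])
  obtain ⟨V₁, hV₁, sV₁⟩ := hv.exists_detour hgeo (by linarith) hτπ₁ (by linarith)
    (hT' (by linarith)) hT1 (by rw [hTπ₁, dv₁])
  obtain ⟨V₂, hV₂, sV₂⟩ := hv.exists_detour hgeo (by linarith) hτπ₂ (by linarith)
    (hT' (by linarith)) hT1 (by rw [hTπ₂, dv₂])
  have sU₀' : IsSplice U₀ v T α α :=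
    ⟨fun t ht => (sU₀.1 ht).trans (hout t ⟨ht.1, by linarith [ht.2]⟩ (.inl ht.2)), sU₀.2⟩
  have su : IsSplice u u T β β := ⟨fun _ _ => rfl, fun t ht => (hTu ht).symm⟩
  have sv : IsSplice v v T β β :=
    ⟨fun _ _ => rfl, fun t ht => (hout t ⟨by linarith [ht.1], ht.2⟩ (.inr ht.1)).symm.trans
      (hTu ht).symm⟩
  refine ⟨fun i => [u, U₂, U₁, U₀, V₁, V₂].getD i v, rfl, rfl, fun i hi => ?_⟩
  interval_cases i
  · refine ⟨hu, su.agreeOffWindow sU₂ ?_ ?_ ?_ ?_ ?_ ?_⟩ <;> linarith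
  · refine ⟨hU₂, sU₂.agreeOffWindow sU₁ ?_ ?_ ?_ ?_ ?_ ?_⟩ <;> linarith
  · refine ⟨hU₁, sU₁.agreeOffWindow sU₀ ?_ ?_ ?_ ?_ ?_ ?_⟩ <;> linarith
  · refine ⟨hU₀, (sV₁.agreeOffWindow sU₀' ?_ ?_ ?_ ?_ ?_ ?_).symm⟩ <;> linarith
  · refine ⟨hV₁, (sV₂.agreeOffWindow sV₁ ?_ ?_ ?_ ?_ ?_ ?_).symm⟩ <;> linarith
  · refine ⟨hV₂, (sv.agreeOffWindow sV₂ ?_ ?_ ?_ ?_ ?_ ?_).symm⟩ <;> linarith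

theorem PropGeodesic.exists_chain (hgeo : GeodesicSpace X) (htri : TripodCond X)
    (hu : PropGeodesic x₀ x₁ u) (hv : PropGeodesic x₀ x₁ v) (huv : AgreeOffWindow u v w) :
    ∃ E : ℕ → ℝ → X, E 0 = u ∧ E 6 = v ∧
      ∀ i < 6, PropGeodesic x₀ x₁ (E i) ∧ AgreeOffWindow (E i) (E (i + 1)) (2 / 3 * w) := by
  obtain ⟨α, β, hα, hαβ, hβ, hw, heq⟩ := huv
  have hw0 : 0 ≤ 2 / 3 * w := by linarith
  by_cases hsame : EqOn u v (Icc 0 1)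
  · refine ⟨fun i => [u].getD i v, rfl, rfl, fun i _ => ?_⟩
    rcases i with _ | i
    · exact ⟨hu, agreeOffWindow_of_eqOn hsame hw0⟩
    · simpa using ⟨hv, agreeOffWindow_of_eqOn (fun _ _ => rfl) hw0⟩
  obtain ⟨t, ht, hne⟩ : ∃ t ∈ Icc (0:ℝ) 1, u t ≠ v t := by
    by_contra! h
    exact hsame h
  have htw : t ∈ Ioo α β := by_contra fun h => hne (heq ⟨ht, h⟩)
  have hD : 0 < dist x₀ x₁ := by
    refine dist_nonneg.lt_of_ne fun hD => hne ?_
    have hu0 := hu.2.2 t ht 0 ⟨le_rfl, zero_le_one⟩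
    have hv0 := hv.2.2 t ht 0 ⟨le_rfl, zero_le_one⟩
    rw [← hD, mul_zero, dist_eq_zero] at hu0 hv0
    rw [hu0, hv0, hu.1, hv.1]
  obtain ⟨E, hE0, hE6, hE⟩ := hu.exists_chain_of_lt hgeo htri hv hα (htw.1.trans htw.2) hβ hD heq
  exact ⟨E, hE0, hE6, fun i hi => ⟨(hE i hi).1, (hE i hi).2.mono (by linarith)⟩⟩

end Surgery

theorem Nat.floor_le_floor_add_one {R : Type*} [Semiring R] [LinearOrder R]
    [IsStrictOrderedRing R] [FloorSemiring R] {a b : R} (hb : 0 ≤ b) (h : a ≤ b + 1) :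
    ⌊a⌋₊ ≤ ⌊b⌋₊ + 1 :=
  (Nat.floor_le_floor h).trans (Nat.floor_add_one hb).le

theorem uniformContinuousOn_of_forall_dist_le {α β : Type*} [PseudoMetricSpace α]
    [PseudoMetricSpace β] {f : α → β} {s : Set α} {δ e : ℕ → ℝ} (hδ : ∀ n, 0 < δ n)
    (he : Tendsto e atTop (𝓝 0))
    (h : ∀ n, ∀ x ∈ s, ∀ y ∈ s, dist x y ≤ δ n → dist (f x) (f y) ≤ e n) :
    UniformContinuousOn f s := by
  refine Metric.uniformContinuousOn_iff.2 fun ε hε => ?_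
  obtain ⟨n, hn⟩ := (he.eventually (gt_mem_nhds hε)).exists
  exact ⟨δ n, hδ n, fun x hx y hy hxy => (h n x hx y hy hxy.le).trans_lt hn⟩

section Tower

variable {X : Type*} [MetricSpace X] {x₀ x₁ : X}

def IsGeodesicChain (x₀ x₁ : X) (w : ℝ) (L : ℕ → ℝ → X) : Prop :=
  ∀ k, PropGeodesic x₀ x₁ (L k) ∧ AgreeOffWindow (L k) (L (k + 1)) w

theorem IsGeodesicChain.exists_refinement (hgeo : GeodesicSpace X) (htri : TripodCond X)
    {w : ℝ} {L : ℕ → ℝ → X} (hL : IsGeodesicChain x₀ x₁ w L) :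
    ∃ L' : ℕ → ℝ → X, IsGeodesicChain x₀ x₁ (2 / 3 * w) L' ∧ ∀ k, L' (6 * k) = L k := by
  choose E hE0 hE6 hE using fun k => (hL k).1.exists_chain hgeo htri (hL (k + 1)).1 (hL k).2
  have hnext : ∀ m, E ((m + 1) / 6) ((m + 1) % 6) = E (m / 6) (m % 6 + 1) := by
    intro m
    rcases Nat.lt_or_ge (m % 6) 5 with h | h
    · rw [show (m + 1) / 6 = m / 6 by omega, show (m + 1) % 6 = m % 6 + 1 by omega]
    · rw [show (m + 1) / 6 = m / 6 + 1 by omega, show (m + 1) % 6 = 0 by omega,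
        show m % 6 + 1 = 6 by omega, hE0, hE6]
  refine ⟨fun m => E (m / 6) (m % 6), fun m => ?_, fun k => ?_⟩
  · simpa only [hnext] using hE (m / 6) (m % 6) (Nat.mod_lt _ (by norm_num))
  · simp only [Nat.mul_div_cancel_left k (by norm_num : 0 < 6), Nat.mul_mod_right, hE0]

def IsGeodesicTower (x₀ x₁ : X) (S : ℕ → ℕ → ℝ → X) : Prop :=
  ∀ n, IsGeodesicChain x₀ x₁ ((2 / 3) ^ n) (S n) ∧ ∀ k, S (n + 1) (6 * k) = S n k

theorem exists_isGeodesicTower (hgeo : GeodesicSpace X) (htri : TripodCond X) {c₀ c₁ : ℝ → X}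
    (h₀ : PropGeodesic x₀ x₁ c₀) (h₁ : PropGeodesic x₀ x₁ c₁) :
    ∃ S, IsGeodesicTower x₀ x₁ S ∧ S 0 0 = c₀ ∧ S 0 1 = c₁ := by
  have : Nonempty X := ⟨x₀⟩
  choose! R hR using fun n (L : ℕ → ℝ → X) (hL : IsGeodesicChain x₀ x₁ ((2 / 3) ^ n) L) =>
    hL.exists_refinement hgeo htri
  let L₀ : ℕ → ℝ → X := fun k => if k = 0 then c₀ else c₁
  have hL₀ : IsGeodesicChain x₀ x₁ ((2 / 3) ^ 0) L₀ := by
    rintro (_ | k)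
    · refine ⟨h₀, 0, 1, le_rfl, zero_le_one, le_rfl, by norm_num, fun t ⟨ht, htw⟩ => ?_⟩
      rcases ht.1.eq_or_lt with rfl | h0
      · simp [L₀, h₀.1, h₁.1]
      rcases ht.2.eq_or_lt with rfl | h1
      · simp [L₀, h₀.2.1, h₁.2.1]
      exact absurd ⟨h0, h1⟩ htw
    · exact ⟨by simpa [L₀] using h₁, agreeOffWindow_of_eqOn (fun t _ => by simp [L₀]) (by norm_num)⟩
  let S : ℕ → ℕ → ℝ → X := fun n => Nat.rec L₀ R n
  have hS : ∀ n, IsGeodesicChain x₀ x₁ ((2 / 3) ^ n) (S n) := by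
    intro n
    induction n with
    | zero => exact hL₀
    | succ n ih => rw [pow_succ']; exact (hR n (S n) ih).1
  exact ⟨S, fun n => ⟨hS n, (hR n (S n) (hS n)).2⟩, rfl, rfl⟩

variable {S : ℕ → ℕ → ℝ → X}

theorem IsGeodesicTower.dist_add_le (hS : IsGeodesicTower x₀ x₁ S) (n k m : ℕ) {t : ℝ}
    (ht : t ∈ Icc (0:ℝ) 1) :
    dist (S n k t) (S n (k + m) t) ≤ m * (2 * (2 / 3) ^ n * dist x₀ x₁) := by
  have := dist_le_Ico_sum_of_dist_le (f := fun j => S n j t) (Nat.le_add_right k m)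
    fun {j} _ _ => ((hS n).1 j).2.dist_le ((hS n).1 j).1 ((hS n).1 (j + 1)).1 ht
  simpa using this

theorem IsGeodesicTower.dist_le_of_le_succ (hS : IsGeodesicTower x₀ x₁ S) {n k k' : ℕ}
    (hk : k ≤ k') (hk' : k' ≤ k + 1) {t : ℝ} (ht : t ∈ Icc (0:ℝ) 1) :
    dist (S n k t) (S n k' t) ≤ 2 * (2 / 3) ^ n * dist x₀ x₁ := by
  obtain ⟨m, rfl⟩ := Nat.exists_eq_add_of_le hk
  refine (hS.dist_add_le n k m ht).trans (mul_le_of_le_one_left (by positivity) ?_)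
  exact_mod_cast (by omega : m ≤ 1)

theorem IsGeodesicTower.level_zero (hS : IsGeodesicTower x₀ x₁ S) (n : ℕ) : S n 0 = S 0 0 := by
  induction n with
  | zero => rfl
  | succ n ih => rw [← ih, ← (hS n).2 0, mul_zero]

theorem IsGeodesicTower.level_top (hS : IsGeodesicTower x₀ x₁ S) (n : ℕ) :
    S n (6 ^ n) = S 0 1 := by
  induction n with
  | zero => rfl
  | succ n ih => rw [← ih, ← (hS n).2, pow_succ']

theorem IsGeodesicTower.dist_succ_le (hS : IsGeodesicTower x₀ x₁ S) (n : ℕ) (s : ℝ) {t : ℝ}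
    (ht : t ∈ Icc (0:ℝ) 1) :
    dist (S n ⌊s * 6 ^ n⌋₊ t) (S (n + 1) ⌊s * 6 ^ (n + 1)⌋₊ t) ≤ 10 * dist x₀ x₁ * (2 / 3) ^ n := by
  set k := ⌊s * 6 ^ (n + 1)⌋₊
  have hk : ⌊s * 6 ^ n⌋₊ = k / 6 := by
    rw [← Nat.floor_div_natCast]
    congr 1
    push_cast
    ring
  have hmod : ((k % 6 : ℕ) : ℝ) ≤ 5 := by
    exact_mod_cast Nat.le_of_lt_succ (Nat.mod_lt k (by norm_num))
  have := hS.dist_add_le (n + 1) (6 * (k / 6)) (k % 6) ht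
  rw [(hS n).2, Nat.div_add_mod] at this
  rw [hk]
  have hD := dist_nonneg (x := x₀) (y := x₁)
  have hr : (0:ℝ) ≤ (2 / 3) ^ n := by positivity
  calc _ ≤ ((k % 6 : ℕ) : ℝ) * (2 * (2 / 3) ^ (n + 1) * dist x₀ x₁) := this
    _ ≤ 5 * (2 * (2 / 3) ^ (n + 1) * dist x₀ x₁) := by gcongr
    _ ≤ 10 * dist x₀ x₁ * (2 / 3) ^ n := by rw [pow_succ]; nlinarith [mul_nonneg hD hr]

variable [Nonempty X]

noncomputable def towerLimit (S : ℕ → ℕ → ℝ → X) (p : ℝ × ℝ) : X :=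
  limUnder atTop fun n => S n ⌊p.2 * 6 ^ n⌋₊ p.1

variable [CompleteSpace X]

theorem IsGeodesicTower.tendsto (hS : IsGeodesicTower x₀ x₁ S) (s : ℝ) {t : ℝ}
    (ht : t ∈ Icc (0:ℝ) 1) :
    Tendsto (fun n => S n ⌊s * 6 ^ n⌋₊ t) atTop (𝓝 (towerLimit S (t, s))) := by
  unfold towerLimit
  exact (cauchySeq_of_le_geometric _ _ (by norm_num) fun n => hS.dist_succ_le n s ht
    ).tendsto_limUnder

theorem IsGeodesicTower.dist_towerLimit_le (hS : IsGeodesicTower x₀ x₁ S) (n : ℕ) (s : ℝ)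
    {t : ℝ} (ht : t ∈ Icc (0:ℝ) 1) :
    dist (S n ⌊s * 6 ^ n⌋₊ t) (towerLimit S (t, s)) ≤ 30 * dist x₀ x₁ * (2 / 3) ^ n := by
  have := dist_le_of_le_geometric_of_tendsto _ _ (by norm_num)
    (fun n => hS.dist_succ_le n s ht) (hS.tendsto s ht) n
  exact this.trans_eq (by ring)

theorem IsGeodesicTower.dist_towerLimit_towerLimit_le (hS : IsGeodesicTower x₀ x₁ S) {n : ℕ}
    {s s' t : ℝ} (hs : 0 ≤ s) (hs' : 0 ≤ s') (hss' : dist s s' ≤ (6 ^ n)⁻¹)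
    (ht : t ∈ Icc (0:ℝ) 1) :
    dist (towerLimit S (t, s)) (towerLimit S (t, s')) ≤ 62 * dist x₀ x₁ * (2 / 3) ^ n := by
  have h6 : (0:ℝ) < 6 ^ n := by positivity
  have hscale : |s * 6 ^ n - s' * 6 ^ n| ≤ 1 := by
    rw [← sub_mul, abs_mul, abs_of_pos h6, ← Real.dist_eq]
    calc dist s s' * 6 ^ n ≤ (6 ^ n)⁻¹ * 6 ^ n := by gcongr
      _ = 1 := inv_mul_cancel₀ h6.ne'
  have hfloor : ∀ {a b : ℝ}, 0 ≤ a → |a * 6 ^ n - b * 6 ^ n| ≤ 1 →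
      ⌊b * 6 ^ n⌋₊ ≤ ⌊a * 6 ^ n⌋₊ + 1 := fun ha hab =>
    Nat.floor_le_floor_add_one (by positivity) (by linarith [(abs_sub_le_iff.1 hab).2])
  have hmid : dist (S n ⌊s * 6 ^ n⌋₊ t) (S n ⌊s' * 6 ^ n⌋₊ t) ≤ 2 * (2 / 3) ^ n * dist x₀ x₁ := by
    rcases le_total ⌊s * 6 ^ n⌋₊ ⌊s' * 6 ^ n⌋₊ with h | h
    · exact hS.dist_le_of_le_succ h (hfloor hs hscale) ht
    · rw [dist_comm]
      exact hS.dist_le_of_le_succ h (hfloor hs' (by rwa [abs_sub_comm])) ht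
  have h₁ := hS.dist_towerLimit_le n s ht
  have h₂ := hS.dist_towerLimit_le n s' ht
  have := dist_triangle4 (towerLimit S (t, s)) (S n ⌊s * 6 ^ n⌋₊ t) (S n ⌊s' * 6 ^ n⌋₊ t)
    (towerLimit S (t, s'))
  rw [dist_comm] at h₁
  linarith

theorem IsGeodesicTower.propGeodesic_towerLimit (hS : IsGeodesicTower x₀ x₁ S) (s : ℝ) :
    PropGeodesic x₀ x₁ fun t => towerLimit S (t, s) :=
  .of_tendsto (fun n => ((hS n).1 _).1) fun _ ht => hS.tendsto s ht

theorem IsGeodesicTower.continuousOn_towerLimit (hS : IsGeodesicTower x₀ x₁ S) :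
    ContinuousOn (towerLimit S) (Icc 0 1 ×ˢ Icc 0 1) := by
  have he : Tendsto (fun n : ℕ => 62 * dist x₀ x₁ * (2 / 3 : ℝ) ^ n) atTop (𝓝 0) := by
    simpa using (tendsto_pow_atTop_nhds_zero_of_lt_one (by norm_num) (by norm_num)).const_mul
      (62 * dist x₀ x₁)
  refine continuousOn_prod_of_continuousOn_lipschitzOnWith _ (nndist x₀ x₁) (fun t ht => ?_)
    fun s _ => (hS.propGeodesic_towerLimit s).lipschitzOnWith
  exact (uniformContinuousOn_of_forall_dist_le (fun n => by positivity) he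
    fun n s hs s' hs' h => hS.dist_towerLimit_towerLimit_le hs.1 hs'.1 h ht).continuousOn

theorem IsGeodesicTower.towerLimit_zero (hS : IsGeodesicTower x₀ x₁ S) {t : ℝ}
    (ht : t ∈ Icc (0:ℝ) 1) : towerLimit S (t, 0) = S 0 0 t :=
  tendsto_nhds_unique (hS.tendsto 0 ht) (by simp [hS.level_zero])

theorem IsGeodesicTower.towerLimit_one (hS : IsGeodesicTower x₀ x₁ S) {t : ℝ}
    (ht : t ∈ Icc (0:ℝ) 1) : towerLimit S (t, 1) = S 0 1 t := by
  refine tendsto_nhds_unique (hS.tendsto 1 ht) ?_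
  have : ∀ n : ℕ, ⌊(6:ℝ) ^ n⌋₊ = 6 ^ n := fun n => by
    rw [← Nat.cast_ofNat, ← Nat.cast_pow, Nat.floor_natCast]
  simp [this, hS.level_top]

end Tower

/-- In a complete geodesic tripod space, any two shortest geodesics with the same
endpoints are contained in a geodesic homotopy. -/
theorem stmt12 {X : Type*} [MetricSpace X] [CompleteSpace X]
    (hgeo : GeodesicSpace X) (htri : TripodCond X)
    (x₀ x₁ : X) (c₀ c₁ : ℝ → X)
    (h₀ : PropGeodesic x₀ x₁ c₀) (h₁ : PropGeodesic x₀ x₁ c₁) :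
    ∃ c : ℝ × ℝ → X,
      ContinuousOn c (Set.Icc (0:ℝ) 1 ×ˢ Set.Icc (0:ℝ) 1) ∧
      (∀ t ∈ Set.Icc (0:ℝ) 1, c (t, 0) = c₀ t ∧ c (t, 1) = c₁ t) ∧
      (∀ s ∈ Set.Icc (0:ℝ) 1, PropGeodesic x₀ x₁ (fun t => c (t, s))) := by
  have : Nonempty X := ⟨x₀⟩
  obtain ⟨S, hS, hS₀, hS₁⟩ := exists_isGeodesicTower hgeo htri h₀ h₁
  refine ⟨towerLimit S, hS.continuousOn_towerLimit, fun t ht => ⟨?_, ?_⟩,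
    fun s _ => hS.propGeodesic_towerLimit s⟩
  · rw [hS.towerLimit_zero ht, hS₀]
  · rw [hS.towerLimit_one ht, hS₁]
end

section
/- Let (X,d) be a complete metric space satisfying Property A: for any two points x₁,x₂ ∈ X and any positive numbers r₁,r₂ with r₁ + r₂ ≥ d(x₁,x₂), the intersection B̄(x₁,r₁) ∩ B̄(x₂,r₂) is nonempty. Then X is a geodesic space. -/
open Filter Topology

section Aux
variable {X : Type*} [MetricSpace X]

private lemma exists_mid
    (hA : ∀ x₁ x₂ : X, ∀ r₁ r₂ : ℝ, 0 < r₁ → 0 < r₂ → dist x₁ x₂ ≤ r₁ + r₂ →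
      (Metric.closedBall x₁ r₁ ∩ Metric.closedBall x₂ r₂).Nonempty)
    (a b : X) :
    ∃ m : X, dist a m = dist a b / 2 ∧ dist m b = dist a b / 2 := by
  by_cases h : a = b
  · exact ⟨a, by simp [h]⟩
  · have hd : 0 < dist a b := dist_pos.mpr h
    obtain ⟨m, hm1, hm2⟩ := hA a b (dist a b / 2) (dist a b / 2)
      (by linarith) (by linarith) (by linarith)
    rw [Metric.mem_closedBall] at hm1 hm2
    have ht := dist_triangle a m b
    have hc : dist a m = dist m a := dist_comm a m
    rw [dist_comm] at hm1
    exact ⟨m, by linarith, by linarith⟩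

private noncomputable def mid
    (hA : ∀ x₁ x₂ : X, ∀ r₁ r₂ : ℝ, 0 < r₁ → 0 < r₂ → dist x₁ x₂ ≤ r₁ + r₂ →
      (Metric.closedBall x₁ r₁ ∩ Metric.closedBall x₂ r₂).Nonempty)
    (a b : X) : X := (exists_mid hA a b).choose

private lemma mid_left (hA : ∀ x₁ x₂ : X, ∀ r₁ r₂ : ℝ, 0 < r₁ → 0 < r₂ → dist x₁ x₂ ≤ r₁ + r₂ →
      (Metric.closedBall x₁ r₁ ∩ Metric.closedBall x₂ r₂).Nonempty) (a b : X) :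
    dist a (mid hA a b) = dist a b / 2 := (exists_mid hA a b).choose_spec.1

private lemma mid_right (hA : ∀ x₁ x₂ : X, ∀ r₁ r₂ : ℝ, 0 < r₁ → 0 < r₂ → dist x₁ x₂ ≤ r₁ + r₂ →
      (Metric.closedBall x₁ r₁ ∩ Metric.closedBall x₂ r₂).Nonempty) (a b : X) :
    dist (mid hA a b) b = dist a b / 2 := (exists_mid hA a b).choose_spec.2

private noncomputable def dy
    (hA : ∀ x₁ x₂ : X, ∀ r₁ r₂ : ℝ, 0 < r₁ → 0 < r₂ → dist x₁ x₂ ≤ r₁ + r₂ →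
      (Metric.closedBall x₁ r₁ ∩ Metric.closedBall x₂ r₂).Nonempty)
    (x y : X) : ℕ → ℕ → X
  | 0, k => if k = 0 then x else y
  | n+1, k => if k % 2 = 0 then dy hA x y n (k / 2)
      else mid hA (dy hA x y n (k / 2)) (dy hA x y n (k / 2 + 1))

variable (hA : ∀ x₁ x₂ : X, ∀ r₁ r₂ : ℝ, 0 < r₁ → 0 < r₂ → dist x₁ x₂ ≤ r₁ + r₂ →
      (Metric.closedBall x₁ r₁ ∩ Metric.closedBall x₂ r₂).Nonempty) (x y : X)

private lemma dy_zero : ∀ n, dy hA x y n 0 = x := by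
  intro n; induction n with
  | zero => simp [dy]
  | succ n ih => simp [dy, ih]

private lemma dy_top : ∀ n, dy hA x y n (2^n) = y := by
  intro n; induction n with
  | zero => simp [dy]
  | succ n ih =>
      have h1 : 2^(n+1) % 2 = 0 := by omega
      have h2 : 2^(n+1) / 2 = 2^n := by omega
      simp [dy, h1, h2, ih]

private lemma dy_consec : ∀ n k, k < 2^n →
    dist (dy hA x y n k) (dy hA x y n (k+1)) = dist x y / 2^n := by
  intro n
  induction n with
  | zero =>
      intro k hk
      interval_cases k
      simp [dy]
  | succ n ih =>
      intro k hk
      rcases Nat.even_or_odd k with ⟨j, hj⟩ | ⟨j, hj⟩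
      · subst hj
        have e1 : (j + j) % 2 = 0 := by omega
        have e2 : (j + j) / 2 = j := by omega
        have e3 : (j + j + 1) % 2 = 1 := by omega
        have e4 : (j + j + 1) / 2 = j := by omega
        have hj2 : j < 2^n := by
          have := hk; rw [pow_succ] at this; omega
        simp only [dy, e1, e2, e3, e4]
        norm_num
        rw [mid_left, ih j hj2, pow_succ]
        ring
      · subst hj
        have e1 : (2*j + 1) % 2 = 1 := by omega
        have e2 : (2*j + 1) / 2 = j := by omega
        have e3 : (2*j + 1 + 1) % 2 = 0 := by omega
        have e4 : (2*j + 1 + 1) / 2 = j + 1 := by omega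
        have hj2 : j < 2^n := by
          have := hk; rw [pow_succ] at this; omega
        simp only [dy, e1, e2, e3, e4]
        norm_num
        rw [mid_right, ih j hj2, pow_succ]
        ring

private lemma dy_refine : ∀ m n k, dy hA x y (n + m) (k * 2^m) = dy hA x y n k := by
  intro m
  induction m with
  | zero => intro n k; simp
  | succ m ih =>
      intro n k
      have e0 : n + (m+1) = (n + m) + 1 := by omega
      have e1 : k * 2^(m+1) = (k * 2^m) * 2 := by rw [pow_succ]; ring
      rw [e0, e1]
      have h1 : (k * 2^m * 2) % 2 = 0 := by omega
      have h2 : (k * 2^m * 2) / 2 = k * 2^m := by omega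
      simp only [dy, h1, h2, if_pos rfl]
      exact ih n k

private lemma dy_chain : ∀ n k j, k + j ≤ 2^n →
    dist (dy hA x y n k) (dy hA x y n (k + j)) ≤ j * (dist x y / 2^n) := by
  intro n k j
  induction j with
  | zero => intro _; simp
  | succ j ih =>
      intro h
      have h1 : k + j ≤ 2^n := by omega
      have h2 : k + j < 2^n := by omega
      calc dist (dy hA x y n k) (dy hA x y n (k + (j+1)))
          ≤ dist (dy hA x y n k) (dy hA x y n (k + j))
            + dist (dy hA x y n (k + j)) (dy hA x y n (k + j + 1)) := by
            rw [show k + (j+1) = k + j + 1 by omega]; exact dist_triangle _ _ _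
        _ ≤ j * (dist x y / 2^n) + dist x y / 2^n := by
            gcongr
            · exact ih h1
            · exact le_of_eq (dy_consec hA x y n (k+j) h2)
        _ = (j+1 : ℕ) * (dist x y / 2^n) := by push_cast; ring

private lemma dy_exact : ∀ n k l, k ≤ l → l ≤ 2^n →
    dist (dy hA x y n k) (dy hA x y n l) = ((l : ℝ) - k) * (dist x y / 2^n) := by
  intro n k l hkl hl
  have h2 : (0:ℝ) < 2^n := by positivity
  have hup : dist (dy hA x y n k) (dy hA x y n l) ≤ ((l:ℝ) - k) * (dist x y / 2^n) := by
    have := dy_chain hA x y n k (l - k) (by omega)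
    rw [show k + (l - k) = l by omega] at this
    calc dist (dy hA x y n k) (dy hA x y n l) ≤ ((l - k : ℕ):ℝ) * (dist x y / 2^n) := this
      _ = ((l:ℝ) - k) * (dist x y / 2^n) := by
          rw [Nat.cast_sub hkl]
  have hlow1 : dist x (dy hA x y n k) ≤ (k:ℝ) * (dist x y / 2^n) := by
    have := dy_chain hA x y n 0 k (by omega)
    rwa [dy_zero hA x y n, zero_add] at this
  have hlow2 : dist (dy hA x y n l) y ≤ ((2^n - l : ℕ):ℝ) * (dist x y / 2^n) := by
    have := dy_chain hA x y n l (2^n - l) (by omega)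
    rwa [show l + (2^n - l) = 2^n by omega, dy_top hA x y] at this
  have htri : dist (dy hA x y n 0) (dy hA x y n (2^n)) ≤
      dist (dy hA x y n 0) (dy hA x y n k) + dist (dy hA x y n k) (dy hA x y n l)
        + dist (dy hA x y n l) (dy hA x y n (2^n)) := dist_triangle4 _ _ _ _
  rw [dy_zero hA x y, dy_top hA x y] at htri
  have hxy : dist x y = (2^n : ℝ) * (dist x y / 2^n) := by field_simp
  have hc : ((2^n - l : ℕ):ℝ) = (2^n : ℝ) - l := by
    rw [Nat.cast_sub hl]; push_cast; ring
  rw [hc] at hlow2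
  apply le_antisymm hup
  nlinarith [(dist_nonneg : (0:ℝ) ≤ dist x y)]


private lemma dy_cross_le (n m k l : ℕ) (hk : k ≤ 2^n) (hl : l ≤ 2^m)
    (h : k * 2^m ≤ l * 2^n) :
    dist (dy hA x y n k) (dy hA x y m l)
      = (l:ℝ) * (dist x y / 2^m) - (k:ℝ) * (dist x y / 2^n) := by
  have e1 : dy hA x y (n+m) (k*2^m) = dy hA x y n k := dy_refine hA x y m n k
  have e2 : dy hA x y (n+m) (l*2^n) = dy hA x y m l := by
    have := dy_refine hA x y n m l
    rwa [Nat.add_comm] at this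
  have hl2 : l * 2^n ≤ 2^(n+m) := by
    calc l * 2^n ≤ 2^m * 2^n := Nat.mul_le_mul_right _ hl
      _ = 2^(n+m) := by rw [pow_add]; ring
  rw [← e1, ← e2, dy_exact hA x y (n+m) _ _ h hl2]
  have hn : (0:ℝ) < 2^n := by positivity
  have hm : (0:ℝ) < 2^m := by positivity
  push_cast
  rw [pow_add]
  field_simp

private lemma dy_cross (n m k l : ℕ) (hk : k ≤ 2^n) (hl : l ≤ 2^m) :
    dist (dy hA x y n k) (dy hA x y m l)
      = |(k:ℝ) * (dist x y / 2^n) - (l:ℝ) * (dist x y / 2^m)| := by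
  have hd0 : (0:ℝ) ≤ dist x y := dist_nonneg
  have hn : (0:ℝ) < 2^n := by positivity
  have hm : (0:ℝ) < 2^m := by positivity
  rcases le_total (k * 2^m) (l * 2^n) with h | h
  · rw [dy_cross_le hA x y n m k l hk hl h]
    have hc : (k:ℝ) * 2^m ≤ (l:ℝ) * 2^n := by exact_mod_cast h
    have hle : (k:ℝ) * (dist x y / 2^n) ≤ (l:ℝ) * (dist x y / 2^m) := by
      rw [mul_div_assoc', mul_div_assoc', div_le_div_iff₀ hn hm]
      nlinarith [mul_nonneg (sub_nonneg.mpr hc) hd0]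
    rw [abs_of_nonpos (by linarith)]
    ring
  · rw [dist_comm, dy_cross_le hA x y m n l k hl hk h]
    have hc : (l:ℝ) * 2^n ≤ (k:ℝ) * 2^m := by exact_mod_cast h
    have hle : (l:ℝ) * (dist x y / 2^m) ≤ (k:ℝ) * (dist x y / 2^n) := by
      rw [mul_div_assoc', mul_div_assoc', div_le_div_iff₀ hm hn]
      nlinarith [mul_nonneg (sub_nonneg.mpr hc) hd0]
    rw [abs_of_nonneg (by linarith)]

end Aux


/-- A complete metric space satisfying Property A (any two closed balls with
`r₁ + r₂ ≥ d(x₁,x₂)` intersect) is a geodesic space. -/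
theorem stmt14 {X : Type*} [MetricSpace X] [CompleteSpace X]
    (hA : ∀ x₁ x₂ : X, ∀ r₁ r₂ : ℝ, 0 < r₁ → 0 < r₂ → dist x₁ x₂ ≤ r₁ + r₂ →
      (Metric.closedBall x₁ r₁ ∩ Metric.closedBall x₂ r₂).Nonempty)
    (x y : X) : ∃ γ : ℝ → X, IsGeodesicFrom x y γ := by
  rcases eq_or_lt_of_le (dist_nonneg : (0:ℝ) ≤ dist x y) with h0 | hd
  · -- degenerate case x = y
    have hd0 : dist x y = 0 := h0.symm
    have hxy : x = y := by rwa [dist_eq_zero] at hd0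
    refine ⟨fun _ => x, rfl, hxy ▸ rfl, ?_⟩
    intro s hs t ht
    rw [hd0] at hs ht
    have hs0 : s = 0 := le_antisymm hs.2 hs.1
    have ht0 : t = 0 := le_antisymm ht.2 ht.1
    subst hs0; subst ht0
    simp
  · -- main case
    have hDne : dist x y ≠ 0 := ne_of_gt hd
    have hpow : ∀ n : ℕ, (0:ℝ) < 2^n := fun n => by positivity
    set D := dist x y with hD
    set k : ℝ → ℕ → ℕ := fun t n => ⌊t * 2^n / D⌋₊ with hk
    set u : ℝ → ℕ → X := fun t n => dy hA x y n (k t n) with hu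
    -- basic bounds on the floor indices
    have hbnd : ∀ t ∈ Set.Icc (0:ℝ) D, ∀ n : ℕ,
        k t n ≤ 2^n ∧ (k t n : ℝ) * (D/2^n) ≤ t ∧ t < (k t n : ℝ) * (D/2^n) + D/2^n := by
      intro t ht n
      have h2n := hpow n
      have ht0 : (0:ℝ) ≤ t := ht.1
      have htD : t ≤ D := ht.2
      have harg : (0:ℝ) ≤ t * 2^n / D := by positivity
      have hfl : (k t n : ℝ) ≤ t * 2^n / D := Nat.floor_le harg
      have hfl2 : t * 2^n / D < (k t n : ℝ) + 1 := Nat.lt_floor_add_one _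
      refine ⟨?_, ?_, ?_⟩
      · have h1 : t * 2^n / D ≤ ((2^n : ℕ) : ℝ) := by
          push_cast
          rw [div_le_iff₀ hd]
          nlinarith
        have h2 := Nat.floor_le_floor h1
        rw [Nat.floor_natCast] at h2
        exact h2
      · calc (k t n : ℝ) * (D/2^n) ≤ (t * 2^n / D) * (D/2^n) := by
              have hpos : (0:ℝ) ≤ D/2^n := by positivity
              exact mul_le_mul_of_nonneg_right hfl hpos
          _ = t := by field_simp
      · have h2 : t * 2^n / D * (D/2^n) < ((k t n : ℝ) + 1) * (D/2^n) := by
          apply mul_lt_mul_of_pos_right hfl2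
          positivity
        have h3 : t * 2^n / D * (D/2^n) = t := by field_simp
        rw [h3] at h2
        linarith [h2]
    -- distance between approximants
    have hdist : ∀ s ∈ Set.Icc (0:ℝ) D, ∀ t ∈ Set.Icc (0:ℝ) D, ∀ n m : ℕ,
        dist (u s n) (u t m) = |(k s n : ℝ) * (D/2^n) - (k t m : ℝ) * (D/2^m)| := by
      intro s hs t ht n m
      exact dy_cross hA x y n m (k s n) (k t m) ((hbnd s hs n).1) ((hbnd t ht m).1)
    -- D/2^n tends to 0
    have hhalf : Filter.Tendsto (fun n : ℕ => D/2^n) Filter.atTop (nhds 0) := by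
      have h1 : Filter.Tendsto (fun n : ℕ => D * (1/2:ℝ)^n) Filter.atTop (nhds (D * 0)) :=
        Filter.Tendsto.const_mul D
          (tendsto_pow_atTop_nhds_zero_of_lt_one (by norm_num) (by norm_num))
      have h2 : (fun n : ℕ => D * (1/2:ℝ)^n) = fun n : ℕ => D/2^n := by
        funext n
        rw [one_div, inv_pow, div_eq_mul_inv]
      rw [h2] at h1
      simpa using h1
    -- the approximating sequences are Cauchy
    have hcauchy : ∀ t ∈ Set.Icc (0:ℝ) D, CauchySeq (u t) := by
      intro t ht
      apply cauchySeq_of_le_tendsto_0 (fun N => 2 * (D/2^N))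
      · intro n m N hn hm
        rw [hdist t ht t ht n m]
        obtain ⟨-, hn1, hn2⟩ := hbnd t ht n
        obtain ⟨-, hm1, hm2⟩ := hbnd t ht m
        have hNn : D/2^n ≤ D/2^N :=
          div_le_div_of_nonneg_left hd.le (hpow N) (pow_le_pow_right₀ (by norm_num) hn)
        have hNm : D/2^m ≤ D/2^N :=
          div_le_div_of_nonneg_left hd.le (hpow N) (pow_le_pow_right₀ (by norm_num) hm)
        have hN0 : (0:ℝ) < D/2^N := by positivity
        rw [abs_sub_le_iff]
        constructor <;> linarith
      · simpa using hhalf.const_mul 2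
    -- limits exist
    have hlim : ∀ t, t ∈ Set.Icc (0:ℝ) D → ∃ p : X, Filter.Tendsto (u t) Filter.atTop (nhds p) :=
      fun t ht => cauchySeq_tendsto_of_complete (hcauchy t ht)
    haveI : Nonempty X := ⟨x⟩
    choose! γ hγ using hlim
    -- parameters converge
    have hpar : ∀ t ∈ Set.Icc (0:ℝ) D,
        Filter.Tendsto (fun n => (k t n : ℝ) * (D/2^n)) Filter.atTop (nhds t) := by
      intro t ht
      apply tendsto_of_tendsto_of_tendsto_of_le_of_le
        (g := fun n : ℕ => t - D/2^n) (h := fun _ : ℕ => t)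
      · have := ((tendsto_const_nhds : Filter.Tendsto (fun _ : ℕ => t) Filter.atTop (nhds t)).sub hhalf)
        simpa using this
      · exact tendsto_const_nhds
      · intro n
        have := (hbnd t ht n).2.2
        linarith
      · intro n
        exact (hbnd t ht n).2.1
    refine ⟨γ, ?_, ?_, ?_⟩
    · -- γ 0 = x
      have h00 : (0:ℝ) ∈ Set.Icc (0:ℝ) D := ⟨le_refl _, hd.le⟩
      have hc : u 0 = fun _ : ℕ => x := by
        funext n
        have : k 0 n = 0 := by simp [hk]
        simp [hu, this, dy_zero hA x y n]
      have := hγ 0 h00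
      rw [hc] at this
      exact tendsto_nhds_unique this tendsto_const_nhds
    · -- γ D = y
      have hDD : D ∈ Set.Icc (0:ℝ) D := ⟨hd.le, le_refl _⟩
      have hc : u D = fun _ : ℕ => y := by
        funext n
        have h1 : D * 2^n / D = ((2^n : ℕ) : ℝ) := by
          push_cast
          field_simp
        have : k D n = 2^n := by
          show ⌊D * 2^n / D⌋₊ = 2^n
          rw [h1, Nat.floor_natCast]
        simp [hu, this, dy_top hA x y n]
      have := hγ D hDD
      rw [hc] at this
      exact tendsto_nhds_unique this tendsto_const_nhds
    · -- isometry
      intro s hs t ht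
      have h1 : Filter.Tendsto (fun n => dist (u s n) (u t n)) Filter.atTop
          (nhds (dist (γ s) (γ t))) := (hγ s hs).dist (hγ t ht)
      have h2 : (fun n => dist (u s n) (u t n))
          = fun n => |(k s n : ℝ) * (D/2^n) - (k t n : ℝ) * (D/2^n)| := by
        funext n
        exact hdist s hs t ht n n
      rw [h2] at h1
      have h3 : Filter.Tendsto (fun n => |(k s n : ℝ) * (D/2^n) - (k t n : ℝ) * (D/2^n)|)
          Filter.atTop (nhds |s - t|) := ((hpar s hs).sub (hpar t ht)).abs
      exact tendsto_nhds_unique h1 h3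
end

section
/- For any three points x̄₁,x̄₂,x̄₃ in the Euclidean plane ℝ² whose Gromov products r₁,r₂,r₃ are all positive, there exists a point x ∈ ℝ² with ‖x−x̄ᵢ‖ ≤ (2/√3)·rᵢ for i = 1,2,3; equivalently, ρ(x̄₁,x̄₂,x̄₃) := inf over x ∈ ℝ² of max{‖x−x̄₁‖/r₁, ‖x−x̄₂‖/r₂, ‖x−x̄₃‖/r₃} is at most 2/√3. -/
theorem rho3_le_of_dist_le {X : Type*} [MetricSpace X] {x₁ x₂ x₃ x : X} {r₁ r₂ r₃ c : ℝ}
    (h₁ : 0 < r₁) (h₂ : 0 < r₂) (h₃ : 0 < r₃) (hx₁ : dist x₁ x ≤ c * r₁)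
    (hx₂ : dist x₂ x ≤ c * r₂) (hx₃ : dist x₃ x ≤ c * r₃) :
    rho3 x₁ x₂ x₃ r₁ r₂ r₃ ≤ c := by
  have hbdd : BddBelow (Set.range fun y : X =>
      max (dist x₁ y / r₁) (max (dist x₂ y / r₂) (dist x₃ y / r₃))) := by
    refine ⟨0, ?_⟩
    rintro _ ⟨y, rfl⟩
    exact le_max_of_le_left (by positivity)
  refine (ciInf_le hbdd x).trans (max_le ?_ (max_le ?_ ?_))
  · rwa [div_le_iff₀ h₁]
  · rwa [div_le_iff₀ h₂]
  · rwa [div_le_iff₀ h₃]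

theorem norm_smul_add_smul_sq {E : Type*} [NormedAddCommGroup E] [InnerProductSpace ℝ E]
    (u v : E) (s t : ℝ) :
    ‖s • u + t • v‖ ^ 2 =
      s ^ 2 * ‖u‖ ^ 2 + t ^ 2 * ‖v‖ ^ 2 + s * t * (‖u‖ ^ 2 + ‖v‖ ^ 2 - ‖u - v‖ ^ 2) := by
  rw [norm_add_sq_real, norm_sub_sq_real, real_inner_smul_left, real_inner_smul_right,
    norm_smul, norm_smul, mul_pow, mul_pow, Real.norm_eq_abs, Real.norm_eq_abs, sq_abs, sq_abs]
  ring

theorem two_div_sqrt_three_mul_sq (r : ℝ) : (2 / √3 * r) ^ 2 = 4 / 3 * r ^ 2 := by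
  rw [mul_pow, div_pow, Real.sq_sqrt (by norm_num : (0 : ℝ) ≤ 3)]
  ring

section TangentDiscs

variable {E : Type*} [NormedAddCommGroup E] [InnerProductSpace ℝ E]

noncomputable def inverseRadiusCenter (x₁ x₂ x₃ : E) (r₁ r₂ r₃ : ℝ) : E :=
  (r₁ * r₂ + r₁ * r₃ + r₂ * r₃)⁻¹ • ((r₂ * r₃) • x₁ + (r₁ * r₃) • x₂ + (r₁ * r₂) • x₃)

theorem inverseRadiusCenter_swap (x₁ x₂ x₃ : E) (r₁ r₂ r₃ : ℝ) :
    inverseRadiusCenter x₂ x₁ x₃ r₂ r₁ r₃ = inverseRadiusCenter x₁ x₂ x₃ r₁ r₂ r₃ := by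
  unfold inverseRadiusCenter
  congr 1
  · ring
  · rw [mul_comm r₂ r₁]
    abel

theorem inverseRadiusCenter_rotate (x₁ x₂ x₃ : E) (r₁ r₂ r₃ : ℝ) :
    inverseRadiusCenter x₃ x₁ x₂ r₃ r₁ r₂ = inverseRadiusCenter x₁ x₂ x₃ r₁ r₂ r₃ := by
  unfold inverseRadiusCenter
  congr 1
  · ring
  · rw [mul_comm r₃ r₂, mul_comm r₃ r₁]
    abel

theorem sub_inverseRadiusCenter {x₁ x₂ x₃ : E} {r₁ r₂ r₃ : ℝ}
    (hD : r₁ * r₂ + r₁ * r₃ + r₂ * r₃ ≠ 0) :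
    x₁ - inverseRadiusCenter x₁ x₂ x₃ r₁ r₂ r₃ =
      (r₁ * r₂ + r₁ * r₃ + r₂ * r₃)⁻¹ • ((r₁ * r₃) • (x₁ - x₂) + (r₁ * r₂) • (x₁ - x₃)) := by
  unfold inverseRadiusCenter
  rw [eq_inv_smul_iff₀ hD, smul_sub, smul_inv_smul₀ hD]
  module

theorem dist_inverseRadiusCenter_le {x₁ x₂ x₃ : E} {r₁ r₂ r₃ : ℝ}
    (h₁ : 0 < r₁) (h₂ : 0 < r₂) (h₃ : 0 < r₃) (h₁₂ : dist x₁ x₂ = r₁ + r₂)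
    (h₁₃ : dist x₁ x₃ = r₁ + r₃) (h₂₃ : dist x₂ x₃ = r₂ + r₃) :
    dist x₁ (inverseRadiusCenter x₁ x₂ x₃ r₁ r₂ r₃) ≤ 2 / √3 * r₁ := by
  set D := r₁ * r₂ + r₁ * r₃ + r₂ * r₃
  have hD : 0 < D := by positivity
  have hsides : ‖(x₁ - x₂) - (x₁ - x₃)‖ = r₂ + r₃ := by
    rw [sub_sub_sub_cancel_left, ← dist_eq_norm, dist_comm, h₂₃]
  have hnorm : D ^ 2 * ‖x₁ - inverseRadiusCenter x₁ x₂ x₃ r₁ r₂ r₃‖ ^ 2 =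
      r₁ ^ 2 * (r₁ * r₂ + r₁ * r₃) * (r₁ * r₂ + r₁ * r₃ + 4 * (r₂ * r₃)) := by
    rw [sub_inverseRadiusCenter hD.ne', norm_smul, mul_pow, ← mul_assoc, Real.norm_eq_abs,
      sq_abs, ← mul_pow, mul_inv_cancel₀ hD.ne', one_pow, one_mul, norm_smul_add_smul_sq,
      hsides, ← dist_eq_norm, ← dist_eq_norm, h₁₂, h₁₃]
    ring
  have hsq : dist x₁ (inverseRadiusCenter x₁ x₂ x₃ r₁ r₂ r₃) ^ 2 ≤ (2 / √3 * r₁) ^ 2 := by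
    rw [two_div_sqrt_three_mul_sq, dist_eq_norm, ← mul_le_mul_iff_right₀ (pow_pos hD 2), hnorm]
    nlinarith [mul_nonneg (sq_nonneg r₁) (sq_nonneg (r₁ * r₂ + r₁ * r₃ - 2 * (r₂ * r₃)))]
  exact pow_le_pow_iff_left₀ dist_nonneg (by positivity) two_ne_zero |>.mp hsq

end TangentDiscs

/-- For any triple in the Euclidean plane with positive Gromov products, some
point is within `(2/√3)·rᵢ` of each vertex; equivalently ρ ≤ 2/√3. -/
theorem stmt15 (x₁ x₂ x₃ : EuclideanSpace ℝ (Fin 2)) (r₁ r₂ r₃ : ℝ)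
    (hr₁ : r₁ = (dist x₁ x₂ + dist x₁ x₃ - dist x₂ x₃) / 2)
    (hr₂ : r₂ = (dist x₁ x₂ + dist x₂ x₃ - dist x₁ x₃) / 2)
    (hr₃ : r₃ = (dist x₁ x₃ + dist x₂ x₃ - dist x₁ x₂) / 2)
    (h₁ : 0 < r₁) (h₂ : 0 < r₂) (h₃ : 0 < r₃) :
    (∃ x : EuclideanSpace ℝ (Fin 2),
      dist x₁ x ≤ 2 / Real.sqrt 3 * r₁ ∧
      dist x₂ x ≤ 2 / Real.sqrt 3 * r₂ ∧
      dist x₃ x ≤ 2 / Real.sqrt 3 * r₃) ∧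
    rho3 x₁ x₂ x₃ r₁ r₂ r₃ ≤ 2 / Real.sqrt 3 := by
  have h₁₂ : dist x₁ x₂ = r₁ + r₂ := by rw [hr₁, hr₂]; ring
  have h₁₃ : dist x₁ x₃ = r₁ + r₃ := by rw [hr₁, hr₃]; ring
  have h₂₃ : dist x₂ x₃ = r₂ + r₃ := by rw [hr₂, hr₃]; ring
  have d₁ := dist_inverseRadiusCenter_le h₁ h₂ h₃ h₁₂ h₁₃ h₂₃
  have d₂ := dist_inverseRadiusCenter_le h₂ h₁ h₃ (by rw [dist_comm, h₁₂, add_comm]) h₂₃ h₁₃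
  have d₃ := dist_inverseRadiusCenter_le h₃ h₁ h₂
    (by rw [dist_comm, h₁₃, add_comm]) (by rw [dist_comm, h₂₃, add_comm]) h₁₂
  rw [inverseRadiusCenter_swap] at d₂
  rw [inverseRadiusCenter_rotate] at d₃
  exact ⟨⟨_, d₁, d₂, d₃⟩, rho3_le_of_dist_le h₁ h₂ h₃ d₁ d₂ d₃⟩
end

section
/- If X is a geodesic metric space that is Gromov δ-hyperbolic, i.e. for any four points x₁,x₂,x₃,x₄ ∈ X one has d(x₁,x₂) + d(x₃,x₄) ≤ max{d(x₁,x₃)+d(x₂,x₄), d(x₁,x₄)+d(x₂,x₃)} + δ, then every geodesic triangle in X is 4δ-slim. -/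
/-- Every geodesic triangle of `X` is δ-slim: each side is contained in the closed
δ-neighbourhood of the union of the two other sides. -/
def SlimTriangles (X : Type*) [MetricSpace X] (δ : ℝ) : Prop :=
  ∀ (x₁ x₂ x₃ : X) (γ₁₂ γ₁₃ γ₂₃ : ℝ → X),
    IsGeodesicFrom x₁ x₂ γ₁₂ → IsGeodesicFrom x₁ x₃ γ₁₃ → IsGeodesicFrom x₂ x₃ γ₂₃ →
    (∀ p ∈ γ₁₂ '' Set.Icc (0:ℝ) (dist x₁ x₂),
      ∃ q ∈ γ₁₃ '' Set.Icc (0:ℝ) (dist x₁ x₃) ∪ γ₂₃ '' Set.Icc (0:ℝ) (dist x₂ x₃),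
        dist p q ≤ δ) ∧
    (∀ p ∈ γ₁₃ '' Set.Icc (0:ℝ) (dist x₁ x₃),
      ∃ q ∈ γ₁₂ '' Set.Icc (0:ℝ) (dist x₁ x₂) ∪ γ₂₃ '' Set.Icc (0:ℝ) (dist x₂ x₃),
        dist p q ≤ δ) ∧
    (∀ p ∈ γ₂₃ '' Set.Icc (0:ℝ) (dist x₂ x₃),
      ∃ q ∈ γ₁₂ '' Set.Icc (0:ℝ) (dist x₁ x₂) ∪ γ₁₃ '' Set.Icc (0:ℝ) (dist x₁ x₃),
        dist p q ≤ δ)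

section Aux
variable {X : Type*} [MetricSpace X]

/-- Reversing a geodesic. -/
lemma rev_geod {x y : X} {γ : ℝ → X} (h : IsGeodesicFrom x y γ) :
    IsGeodesicFrom y x (fun t => γ (dist x y - t)) := by
  obtain ⟨h0, h1, hiso⟩ := h
  refine ⟨by simpa using h1, ?_, ?_⟩
  · rw [dist_comm]; simpa using h0
  · intro s hs t ht
    rw [dist_comm y x] at hs ht
    have hs' : dist x y - s ∈ Set.Icc (0:ℝ) (dist x y) := ⟨by linarith [hs.2], by linarith [hs.1]⟩
    have ht' : dist x y - t ∈ Set.Icc (0:ℝ) (dist x y) := ⟨by linarith [ht.2], by linarith [ht.1]⟩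
    have := hiso _ hs' _ ht'
    simp only at this ⊢
    rw [this]
    rw [show dist x y - s - (dist x y - t) = -(s - t) by ring, abs_neg]

lemma rev_image {x y : X} (γ : ℝ → X) :
    (fun t => γ (dist x y - t)) '' Set.Icc (0:ℝ) (dist y x) = γ '' Set.Icc (0:ℝ) (dist x y) := by
  rw [dist_comm y x, show (fun t => γ (dist x y - t)) = γ ∘ (fun t => dist x y - t) from rfl,
    Set.image_comp]
  congr 1
  have : (dist x y - ·) '' Set.Icc (0:ℝ) (dist x y) = Set.Icc (dist x y - dist x y) (dist x y - 0) :=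
    Set.image_const_sub_Icc _ _ _
  simpa using this

/-- A point is close to a point on a geodesic, up to its Gromov product plus δ. -/
lemma near_geod {δ : ℝ}
    (hgromov : ∀ x₁ x₂ x₃ x₄ : X,
      dist x₁ x₂ + dist x₃ x₄ ≤
        max (dist x₁ x₃ + dist x₂ x₄) (dist x₁ x₄ + dist x₂ x₃) + δ)
    (x y z : X) (γ : ℝ → X) (h : IsGeodesicFrom y z γ) :
    ∃ q ∈ γ '' Set.Icc (0:ℝ) (dist y z),
      dist x q ≤ (dist x y + dist x z - dist y z) / 2 + δ := by
  obtain ⟨h0, h1, hiso⟩ := h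
  set D := dist y z with hD
  set t := (dist x y + D - dist x z) / 2 with htdef
  have d1 : dist x z ≤ dist x y + D := by rw [hD]; exact dist_triangle x y z
  have d2 : dist x y ≤ dist x z + D := by
    rw [hD, dist_comm y z]; exact dist_triangle x z y
  have ht : t ∈ Set.Icc (0:ℝ) D := ⟨by simp only [htdef]; linarith, by simp only [htdef]; linarith⟩
  have hDmem : (0:ℝ) ∈ Set.Icc (0:ℝ) D := ⟨le_refl _, dist_nonneg⟩
  have hDmem' : D ∈ Set.Icc (0:ℝ) D := ⟨dist_nonneg, le_refl _⟩
  refine ⟨γ t, ⟨t, ht, rfl⟩, ?_⟩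
  have hyq : dist y (γ t) = t := by
    have := hiso 0 hDmem t ht
    rw [h0] at this
    rw [this, abs_of_nonpos (by linarith [ht.1])]
    ring
  have hqz : dist (γ t) z = D - t := by
    have := hiso t ht D hDmem'
    rw [h1] at this
    rw [this, abs_of_nonpos (by linarith [ht.2])]
    ring
  have H := hgromov x (γ t) y z
  rw [dist_comm (γ t) y, hyq, hqz] at H
  rcases max_le_iff.mp (le_refl (max (dist x y + (D - t)) (dist x z + t))) with _
  rcases le_total (dist x y + (D - t)) (dist x z + t) with h' | h'
  · rw [max_eq_right h'] at H
    simp only [htdef] at H ⊢; linarith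
  · rw [max_eq_left h'] at H
    simp only [htdef] at H ⊢; linarith

/-- Each point on side [a,b] is 4δ-close to one of the two other sides. -/
lemma side_slim {δ : ℝ} (hδ : 0 ≤ δ)
    (hgromov : ∀ x₁ x₂ x₃ x₄ : X,
      dist x₁ x₂ + dist x₃ x₄ ≤
        max (dist x₁ x₃ + dist x₂ x₄) (dist x₁ x₄ + dist x₂ x₃) + δ)
    (a b c : X) (γab γac γbc : ℝ → X)
    (hab : IsGeodesicFrom a b γab) (hac : IsGeodesicFrom a c γac)
    (hbc : IsGeodesicFrom b c γbc)
    {s : ℝ} (hs : s ∈ Set.Icc (0:ℝ) (dist a b)) :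
    ∃ q ∈ γac '' Set.Icc (0:ℝ) (dist a c) ∪ γbc '' Set.Icc (0:ℝ) (dist b c),
      dist (γab s) q ≤ 4 * δ := by
  obtain ⟨h0, h1, hiso⟩ := hab
  set p := γab s with hp
  set D := dist a b with hD
  have hap : dist a p = s := by
    have := hiso 0 ⟨le_refl _, dist_nonneg⟩ s hs
    rw [h0] at this
    rw [hp, this, abs_of_nonpos (by linarith [hs.1])]; ring
  have hbp : dist b p = D - s := by
    have := hiso D ⟨dist_nonneg, le_refl _⟩ s hs
    rw [h1] at this
    rw [hp, this, abs_of_nonneg (by linarith [hs.2])]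
  have H := hgromov a b c p
  rw [← hD] at H
  rcases le_total (dist a c + dist b p) (dist a p + dist b c) with h' | h'
  · -- close to side bc
    rw [max_eq_right h'] at H
    obtain ⟨q, hq, hdq⟩ := near_geod hgromov p b c γbc hbc
    refine ⟨q, Or.inr hq, ?_⟩
    have e1 : dist p b = dist b p := dist_comm _ _
    have e2 : dist c p = dist p c := dist_comm _ _
    calc dist p q ≤ (dist p b + dist p c - dist b c) / 2 + δ := hdq
      _ ≤ 4 * δ := by rw [e1, hbp]; rw [hap] at H; rw [e2] at H; linarith
  · -- close to side ac
    rw [max_eq_left h'] at H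
    obtain ⟨q, hq, hdq⟩ := near_geod hgromov p a c γac hac
    refine ⟨q, Or.inl hq, ?_⟩
    have e1 : dist p a = dist a p := dist_comm _ _
    have e2 : dist c p = dist p c := dist_comm _ _
    calc dist p q ≤ (dist p a + dist p c - dist a c) / 2 + δ := hdq
      _ ≤ 4 * δ := by rw [e1, hap]; rw [hbp] at H; rw [e2] at H; linarith

end Aux

/-- A geodesic Gromov δ-hyperbolic space has 4δ-slim triangles. -/
theorem stmt17 {X : Type*} [MetricSpace X] (hgeo : GeodesicSpace X)
    (δ : ℝ) (hδ : 0 ≤ δ)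
    (hgromov : ∀ x₁ x₂ x₃ x₄ : X,
      dist x₁ x₂ + dist x₃ x₄ ≤
        max (dist x₁ x₃ + dist x₂ x₄) (dist x₁ x₄ + dist x₂ x₃) + δ) :
    SlimTriangles X (4 * δ) := by
  
  intro x₁ x₂ x₃ γ₁₂ γ₁₃ γ₂₃ h12 h13 h23
  refine ⟨?_, ?_, ?_⟩
  · rintro p ⟨s, hs, rfl⟩
    exact side_slim hδ hgromov x₁ x₂ x₃ γ₁₂ γ₁₃ γ₂₃ h12 h13 h23 hs
  · rintro p ⟨s, hs, rfl⟩
    have h32 : IsGeodesicFrom x₃ x₂ (fun t => γ₂₃ (dist x₂ x₃ - t)) := rev_geod h23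
    obtain ⟨q, hq, hdq⟩ :=
      side_slim hδ hgromov x₁ x₃ x₂ γ₁₃ γ₁₂ _ h13 h12 h32 hs
    rw [rev_image γ₂₃] at hq
    exact ⟨q, hq, hdq⟩
  · rintro p ⟨s, hs, rfl⟩
    have h21 : IsGeodesicFrom x₂ x₁ (fun t => γ₁₂ (dist x₁ x₂ - t)) := rev_geod h12
    have h31 : IsGeodesicFrom x₃ x₁ (fun t => γ₁₃ (dist x₁ x₃ - t)) := rev_geod h13
    obtain ⟨q, hq, hdq⟩ :=
      side_slim hδ hgromov x₂ x₃ x₁ γ₂₃ _ _ h23 h21 h31 hs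
    rw [rev_image γ₁₂, rev_image γ₁₃] at hq
    exact ⟨q, hq, hdq⟩
end

section
/- A complete metric space Y is hyperconvex provided that for each ε > 0 there exists a subset X ⊆ Y which is hyperconvex with the induced metric and such that Y is contained in the closed ε-neighborhood of X (every point of Y is within distance ε of X). -/
/-- A metric space is hyperconvex if every family of closed balls with positive
radii satisfying `rᵢ + rⱼ ≥ d(xᵢ,xⱼ)` pairwise has nonempty intersection.
(Families of balls are encoded as sets of center–radius pairs.) -/
def Hyperconvex (X : Type*) [MetricSpace X] : Prop :=
  ∀ S : Set (X × ℝ), (∀ p ∈ S, 0 < p.2) →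
    (∀ p ∈ S, ∀ q ∈ S, dist p.1 q.1 ≤ p.2 + q.2) →
    (⋂ p ∈ S, Metric.closedBall p.1 p.2).Nonempty

/-- Given an admissible family `S` in `Y` and a hyperconvex `ε`-dense subset `X`,
there is a point within `p.2 + 2ε` of every center. -/
lemma approx_center {Y : Type*} [MetricSpace Y] (S : Set (Y × ℝ))
    (hpos : ∀ p ∈ S, 0 < p.2)
    (hdist : ∀ p ∈ S, ∀ q ∈ S, dist p.1 q.1 ≤ p.2 + q.2)
    {ε : ℝ} (hε : 0 < ε) (X : Set Y) (hX : Hyperconvex X)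
    (hd : ∀ y : Y, ∃ x ∈ X, dist y x ≤ ε) :
    ∃ z : Y, ∀ p ∈ S, dist z p.1 ≤ p.2 + 2 * ε := by
  choose g hg1 hg2 using hd
  set f : Y → X := fun y => ⟨g y, hg1 y⟩ with hf
  set T : Set (↑X × ℝ) := (fun p : Y × ℝ => (f p.1, p.2 + ε)) '' S with hT
  have h1 : ∀ p ∈ T, 0 < p.2 := by
    rintro _ ⟨p, hp, rfl⟩
    exact add_pos (hpos p hp) hε
  have h2 : ∀ p ∈ T, ∀ q ∈ T, dist p.1 q.1 ≤ p.2 + q.2 := by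
    rintro _ ⟨p, hp, rfl⟩ _ ⟨q, hq, rfl⟩
    simp only [Subtype.dist_eq]
    calc dist (g p.1) (g q.1)
        ≤ dist (g p.1) p.1 + dist p.1 q.1 + dist q.1 (g q.1) := dist_triangle4 _ _ _ _
      _ ≤ ε + (p.2 + q.2) + ε := by
          gcongr
          · rw [dist_comm]; exact hg2 p.1
          · exact hdist p hp q hq
          · exact hg2 q.1
      _ = (p.2 + ε) + (q.2 + ε) := by ring
  obtain ⟨z, hz⟩ := hX T h1 h2
  refine ⟨(z : Y), fun p hp => ?_⟩
  have hmem : z ∈ Metric.closedBall (f p.1) (p.2 + ε) :=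
    Set.mem_iInter₂.1 hz (f p.1, p.2 + ε) ⟨p, hp, rfl⟩
  have hdz : dist (z : Y) (g p.1) ≤ p.2 + ε := by
    have := Metric.mem_closedBall.1 hmem
    rwa [Subtype.dist_eq] at this
  calc dist (z : Y) p.1 ≤ dist (z : Y) (g p.1) + dist (g p.1) p.1 := dist_triangle _ _ _
    _ ≤ (p.2 + ε) + ε := by
        gcongr
        rw [dist_comm]; exact hg2 p.1
    _ = p.2 + 2 * ε := by ring

/-- A complete metric space is hyperconvex provided that for each ε > 0 it has a
hyperconvex subset (with the induced metric) whose closed ε-neighbourhood is the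
whole space. -/
theorem stmt19 {Y : Type*} [MetricSpace Y] [CompleteSpace Y]
    (h : ∀ ε > (0:ℝ), ∃ X : Set Y, Hyperconvex X ∧ ∀ y : Y, ∃ x ∈ X, dist y x ≤ ε) :
    Hyperconvex Y := by
  intro S hpos hdist
  -- base point
  obtain ⟨X0, hX0, hd0⟩ := h (1/2) (by norm_num)
  obtain ⟨y0, hy0⟩ := approx_center S hpos hdist (by norm_num : (0:ℝ) < 1/2) X0 hX0 hd0
  have hy0' : ∀ p ∈ S, dist y0 p.1 ≤ p.2 + (1/2 : ℝ) ^ (0 : ℕ) := by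
    intro p hp
    have := hy0 p hp
    norm_num at this ⊢
    linarith
  have hYne : Nonempty Y := ⟨y0⟩
  -- inductive step
  have step : ∀ (n : ℕ) (y : Y), (∀ p ∈ S, dist y p.1 ≤ p.2 + (1/2 : ℝ) ^ n) →
      ∃ z : Y, (∀ p ∈ S, dist z p.1 ≤ p.2 + (1/2 : ℝ) ^ (n + 1)) ∧
        dist z y ≤ (1/2 : ℝ) ^ n + (1/2 : ℝ) ^ (n + 1) := by
    intro n y hy
    obtain ⟨X, hX, hd⟩ := h ((1/2 : ℝ) ^ (n + 2)) (by positivity)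
    have hpos' : ∀ p ∈ S ∪ {(y, (1/2 : ℝ) ^ n)}, 0 < p.2 := by
      rintro p (hp | hp)
      · exact hpos p hp
      · simp only [Set.mem_singleton_iff] at hp
        subst hp; positivity
    have hdist' : ∀ p ∈ S ∪ {(y, (1/2 : ℝ) ^ n)}, ∀ q ∈ S ∪ {(y, (1/2 : ℝ) ^ n)},
        dist p.1 q.1 ≤ p.2 + q.2 := by
      rintro p (hp | hp) q (hq | hq)
      · exact hdist p hp q hq
      · simp only [Set.mem_singleton_iff] at hq
        subst hq
        rw [dist_comm]
        simpa [add_comm] using hy p hp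
      · simp only [Set.mem_singleton_iff] at hp
        subst hp
        simpa [add_comm] using hy q hq
      · simp only [Set.mem_singleton_iff] at hp hq
        subst hp; subst hq
        simp only [dist_self]
        positivity
    obtain ⟨z, hz⟩ := approx_center _ hpos' hdist' (by positivity : (0:ℝ) < (1/2:ℝ)^(n+2))
      X hX hd
    have h2e : 2 * (1/2 : ℝ) ^ (n + 2) = (1/2 : ℝ) ^ (n + 1) := by ring
    refine ⟨z, fun p hp => ?_, ?_⟩
    · have := hz p (Or.inl hp)
      rwa [h2e] at this
    · have := hz (y, (1/2 : ℝ) ^ n) (Or.inr rfl)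
      rw [h2e] at this
      simpa using this
  choose! f hf1 hf2 using step
  set u : ℕ → Y := fun n => Nat.rec y0 (fun n y => f n y) n with hu
  have hukey : ∀ n, ∀ p ∈ S, dist (u n) p.1 ≤ p.2 + (1/2 : ℝ) ^ n := by
    intro n
    induction n with
    | zero => exact hy0'
    | succ n ih => exact hf1 n (u n) ih
  have hustep : ∀ n, dist (u (n + 1)) (u n) ≤ (1/2 : ℝ) ^ n + (1/2 : ℝ) ^ (n + 1) :=
    fun n => hf2 n (u n) (hukey n)
  have hcauchy : CauchySeq u := by
    apply cauchySeq_of_le_geometric (1/2 : ℝ) 2 (by norm_num)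
    intro n
    rw [dist_comm]
    calc dist (u (n + 1)) (u n) ≤ (1/2 : ℝ) ^ n + (1/2 : ℝ) ^ (n + 1) := hustep n
      _ ≤ 2 * (1/2 : ℝ) ^ n := by
          have : (1/2 : ℝ) ^ (n + 1) = (1/2) * (1/2 : ℝ) ^ n := by ring
          rw [this]
          nlinarith [pow_pos (by norm_num : (0:ℝ) < 1/2) n]
  obtain ⟨y, hy⟩ := cauchySeq_tendsto_of_complete hcauchy
  refine ⟨y, Set.mem_iInter₂.2 fun p hp => Metric.mem_closedBall.2 ?_⟩
  have hlim1 : Filter.Tendsto (fun n => dist (u n) p.1) Filter.atTop (nhds (dist y p.1)) :=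
    hy.dist tendsto_const_nhds
  have hlim2 : Filter.Tendsto (fun n => p.2 + (1/2 : ℝ) ^ n) Filter.atTop (nhds p.2) := by
    have := tendsto_pow_atTop_nhds_zero_of_lt_one (by norm_num : (0:ℝ) ≤ 1/2)
      (by norm_num : (1/2:ℝ) < 1)
    simpa using tendsto_const_nhds.add this
  exact le_of_tendsto_of_tendsto' hlim1 hlim2 fun n => hukey n p hp
end
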